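/- arXiv:1506.00983 — 6 statements merged into one kernel-verified Lean document; each statement's English description precedes it below -/
import Mathlib

section
/- For every ε > 0 there exists N₀ such that for all n ≥ N₀, every order-n Latin square has at most ((1+ε)/e)^n · n! transversals. -/
/-!
Visit the rows in the order given by a permutation `π` and build a transversal greedily: row
`π K` must receive a cell whose column and symbol are both still unused. If `N_K(π, σ)` is the
number of such cells available to row `π K` while building the transversal `σ`, then
`∏_K N_K(π, σ)⁻¹` is the probability that uniformly random greedy choices produce `σ`, so these
numbers sum to at most one over all transversals. By AM-GM, first over the `T` transversals
and then over the `n!` orders, `T ≤ ∏_K D_K` whenever `D_K` bounds the mean of `N_K(π, σ)` over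
`π` for every `σ`.

Besides the cell of `σ` in row `π K`, the cell `(π K, σ u)` is available exactly when both `u`
and the row in which `σ` carries the symbol `L (π K) (σ u)` come after position `K`. These three
rows are distinct, so the mean of `N_K(π, σ)` over `π` is `1 + c (c - 1) / (n - 2)` with
`c = n - 1 - K`. Hence `T ≤ ∏_{j < n} (1 + j² / (n - 2))`, and comparing
`1 + j² / (n - 2) ≤ (1 + j / √(n - 2))²` with Stirling's formula bounds this product by
`n! · e^{O(√n log n)} / eⁿ`.
-/

/-- An order-`n` Latin square: an `n × n` matrix over `Fin n` in which every
symbol occurs exactly once in every row and exactly once in every column. -/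
def IsLatinSquare {n : ℕ} (L : Fin n → Fin n → Fin n) : Prop :=
  (∀ i, Function.Bijective (L i)) ∧ ∀ j, Function.Bijective fun i => L i j

/-- A transversal of `L`, encoded by the permutation `σ` assigning to each row
the column of its chosen cell: the cells `(i, σ i)` lie in pairwise distinct rows
and columns, and the symbols `L i (σ i)` comprise each symbol exactly once. -/
def IsTransversal {n : ℕ} (L : Fin n → Fin n → Fin n) (σ : Equiv.Perm (Fin n)) : Prop :=
  Function.Bijective fun i => L i (σ i)

/-- The number of transversals of `L`. -/
noncomputable def transversalCount {n : ℕ} (L : Fin n → Fin n → Fin n) : ℕ :=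
  Nat.card {σ : Equiv.Perm (Fin n) // IsTransversal L σ}

open Finset Equiv Filter Asymptotics

theorem prod_le_sum_div_card_pow {ι : Type*} (s : Finset ι) (f : ι → ℝ)
    (hf : ∀ i ∈ s, 0 ≤ f i) : ∏ i ∈ s, f i ≤ ((∑ i ∈ s, f i) / #s) ^ #s := by
  rcases s.eq_empty_or_nonempty with rfl | hs
  · simp
  have hc : (0 : ℝ) < #s := by exact_mod_cast hs.card_pos
  have h := Real.geom_mean_le_arith_mean_weighted s (fun _ => (#s : ℝ)⁻¹) f
    (fun _ _ => by positivity) (by simp [hc.ne']) hf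
  rw [Real.finsetProd_rpow s f hf, ← mul_sum, inv_mul_eq_div] at h
  calc ∏ i ∈ s, f i = ((∏ i ∈ s, f i) ^ (#s : ℝ)⁻¹) ^ #s := by
        rw [← Real.rpow_natCast, ← Real.rpow_mul (prod_nonneg hf), inv_mul_cancel₀ hc.ne',
          Real.rpow_one]
    _ ≤ _ := pow_le_pow_left₀ (Real.rpow_nonneg (prod_nonneg hf) _) h _

theorem card_pow_card_le_prod_of_sum_inv_le_one {ι : Type*} (s : Finset ι) (x : ι → ℝ)
    (hx : ∀ i ∈ s, 0 < x i) (hsum : ∑ i ∈ s, (x i)⁻¹ ≤ 1) :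
    (#s : ℝ) ^ #s ≤ ∏ i ∈ s, x i := by
  rcases s.eq_empty_or_nonempty with rfl | hs
  · simp
  have hc : (0 : ℝ) < #s := by exact_mod_cast hs.card_pos
  have h := prod_le_sum_div_card_pow s (fun i => (x i)⁻¹) fun i hi => (inv_pos.2 (hx i hi)).le
  rw [prod_inv_distrib] at h
  refine (inv_le_inv₀ (prod_pos hx) (by positivity)).1 (h.trans ?_)
  rw [← inv_pow, ← one_div]
  gcongr
  exact div_nonneg (sum_nonneg fun i hi => (inv_pos.2 (hx i hi)).le) hc.le

theorem card_le_prod_of_sum_prod_inv_le_one {ι ρ κ : Type*} [Fintype ρ] [Nonempty ρ]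
    [Fintype κ] (S : Finset ι) (N : ρ → ι → κ → ℝ) (D : κ → ℝ) (hD : ∀ k, 0 ≤ D k)
    (hN : ∀ π, ∀ σ ∈ S, ∀ k, 0 < N π σ k) (hkraft : ∀ π, ∑ σ ∈ S, ∏ k, (N π σ k)⁻¹ ≤ 1)
    (hmean : ∀ σ ∈ S, ∀ k, ∑ π, N π σ k ≤ Fintype.card ρ * D k) :
    (#S : ℝ) ≤ ∏ k, D k := by
  rcases S.eq_empty_or_nonempty with rfl | hS
  · simpa using prod_nonneg fun k _ => hD k
  set M := Fintype.card ρ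
  have hM : (0 : ℝ) < M := by exact_mod_cast Fintype.card_pos
  have hcard : ∀ π, (#S : ℝ) ^ #S ≤ ∏ σ ∈ S, ∏ k, N π σ k := fun π =>
    card_pow_card_le_prod_of_sum_inv_le_one S _ (fun σ hσ => prod_pos fun k _ => hN π σ hσ k)
      (by simpa only [prod_inv_distrib] using hkraft π)
  have hprod_nonneg : ∀ σ ∈ S, ∀ k, 0 ≤ ∏ π, N π σ k := fun σ hσ k =>
    prod_nonneg fun π _ => (hN π σ hσ k).le
  have hprod : ∀ σ ∈ S, ∀ k, ∏ π, N π σ k ≤ D k ^ M := fun σ hσ k =>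
    (prod_le_sum_div_card_pow _ _ fun π _ => (hN π σ hσ k).le).trans <|
      pow_le_pow_left₀ (div_nonneg (sum_nonneg fun π _ => (hN π σ hσ k).le) hM.le)
        (div_le_of_le_mul₀ hM.le (hD k) (by simpa [mul_comm] using hmean σ hσ k)) _
  have key : (#S : ℝ) ^ (#S * M) ≤ (∏ k, D k) ^ (#S * M) :=
    calc (#S : ℝ) ^ (#S * M) = ∏ _π : ρ, (#S : ℝ) ^ #S := by
          rw [prod_const, card_univ, pow_mul]
      _ ≤ ∏ π, ∏ σ ∈ S, ∏ k, N π σ k :=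
          prod_le_prod (fun _ _ => by positivity) fun π _ => hcard π
      _ = ∏ σ ∈ S, ∏ k, ∏ π, N π σ k := by
          rw [Finset.prod_comm]; exact prod_congr rfl fun σ _ => Finset.prod_comm
      _ ≤ ∏ σ ∈ S, ∏ k, D k ^ M :=
          prod_le_prod (fun σ hσ => prod_nonneg fun k _ => hprod_nonneg σ hσ k)
            fun σ hσ => prod_le_prod (fun k _ => hprod_nonneg σ hσ k) fun k _ => hprod σ hσ k
      _ = (∏ k, D k) ^ (#S * M) := by
          rw [prod_pow, prod_const, ← pow_mul, mul_comm]
  exact le_of_pow_le_pow_left₀ (by positivity) (prod_nonneg fun k _ => hD k) key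

/-- The summand is the probability that choosing each `f K` uniformly from `A K f`, in the order
`K = 0, 1, …`, produces `f`. -/
theorem sum_prod_inv_card_le_one {α : Type*} {n : ℕ} (S : Finset (Fin n → α))
    (A : Fin n → (Fin n → α) → Finset α)
    (hA : ∀ K f g, (∀ m < K, f m = g m) → A K f = A K g) (hS : ∀ f ∈ S, ∀ K, f K ∈ A K f) :
    ∑ f ∈ S, ∏ K, ((#(A K f) : ℝ))⁻¹ ≤ 1 := by
  classical
  induction n with
  | zero => simpa using S.card_le_one_of_subsingleton
  | succ n ih =>
    rcases S.eq_empty_or_nonempty with rfl | ⟨f₀, -⟩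
    · simp
    set B := A 0 f₀
    have hB : ∀ f, A 0 f = B := fun f => hA 0 f f₀ fun m hm => absurd hm (Fin.not_lt_zero m)
    have hfiber : ∀ a, ∑ f ∈ S with f 0 = a, ∏ K : Fin n, ((#(A K.succ f) : ℝ))⁻¹ ≤ 1 := by
      intro a
      have hcons : ∀ f ∈ S.filter (· 0 = a), Fin.cons a (Fin.tail f) = f := by
        intro f hf
        rw [← (mem_filter.1 hf).2, Fin.cons_self_tail]
      have hinj : Set.InjOn Fin.tail (S.filter (· 0 = a) : Set (Fin (n + 1) → α)) :=
        fun f hf g hg hfg => by rw [← hcons f hf, ← hcons g hg, hfg]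
      have htail := ih ((S.filter (· 0 = a)).image Fin.tail) (fun K g => A K.succ (Fin.cons a g))
        (fun K g g' hgg' => hA K.succ _ _ fun m hm => by
          induction m using Fin.cases with
          | zero => rfl
          | succ m => exact hgg' m (Fin.succ_lt_succ_iff.1 hm))
        (by
          simp only [mem_image, forall_exists_index, and_imp]
          rintro _ f hf rfl K
          rw [hcons f hf]
          exact hS f (mem_filter.1 hf).1 K.succ)
      rw [sum_image hinj] at htail
      refine htail.trans_eq' (sum_congr rfl fun f hf => ?_)
      rw [hcons f hf]
    calc ∑ f ∈ S, ∏ K, ((#(A K f) : ℝ))⁻¹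
        = ∑ a ∈ B, ∑ f ∈ S with f 0 = a,
            (#B : ℝ)⁻¹ * ∏ K : Fin n, ((#(A K.succ f) : ℝ))⁻¹ := by
          rw [← sum_fiberwise_of_maps_to fun f hf => hB f ▸ hS f hf 0]
          simp only [Fin.prod_univ_succ, hB]
      _ ≤ ∑ a ∈ B, (#B : ℝ)⁻¹ := by
          gcongr with a
          rw [← mul_sum]
          exact mul_le_of_le_one_right (by positivity) (hfiber a)
      _ ≤ 1 := by
          rw [sum_const, nsmul_eq_mul]
          exact mul_inv_le_one

section

variable {α : Type*} [DecidableEq α] (g : α → α → α) {a b : α}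

theorem card_perm_apply_eq_eq_of_notMem [Fintype α] {r r' : α} (hr : r ∉ ({a, b} : Finset α))
    (hr' : r' ∉ ({a, b} : Finset α)) :
    #{π : Perm α | π r = g (π a) (π b)} = #{π : Perm α | π r' = g (π a) (π b)} := by
  simp only [mem_insert, mem_singleton, not_or] at hr hr'
  refine card_equiv (Equiv.mulRight (swap r r')) fun π => ?_
  simp [swap_apply_of_ne_of_ne, Ne.symm hr.1, Ne.symm hr.2, Ne.symm hr'.1, Ne.symm hr'.2]

theorem symm_apply_notMem_pair (hg : ∀ x y, x ≠ y → g x y ≠ x ∧ g x y ≠ y) (hab : a ≠ b)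
    (π : Perm α) : π.symm (g (π a) (π b)) ∉ ({a, b} : Finset α) := by
  have := hg (π a) (π b) (π.injective.ne hab)
  simp only [mem_insert, mem_singleton, not_or, π.symm_apply_eq]
  exact ⟨fun h => this.1 h, fun h => this.2 h⟩

theorem sum_card_perm_apply_eq [Fintype α] (hg : ∀ x y, x ≠ y → g x y ≠ x ∧ g x y ≠ y)
    (hab : a ≠ b) :
    ∑ r ∈ ({a, b} : Finset α)ᶜ, #{π : Perm α | π r = g (π a) (π b)}
      = (Fintype.card α).factorial := by
  rw [← Fintype.card_perm, ← card_univ, card_eq_sum_ones]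
  refine (sum_card_bipartiteAbove_eq_sum_card_bipartiteBelow
    (fun r (π : Perm α) => π r = g (π a) (π b)) ..).trans ?_
  refine sum_congr rfl fun π _ => card_eq_one.2 ⟨π.symm (g (π a) (π b)), ?_⟩
  ext r
  simp only [bipartiteBelow, mem_filter, mem_compl, mem_singleton, ← π.eq_symm_apply]
  constructor
  · exact fun h => h.2
  · rintro rfl
    exact ⟨symm_apply_notMem_pair g hg hab π, rfl⟩

theorem card_sub_two_mul_card_perm_apply_eq [Fintype α]
    (hg : ∀ x y, x ≠ y → g x y ≠ x ∧ g x y ≠ y) (hab : a ≠ b) {r : α}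
    (hr : r ∉ ({a, b} : Finset α)) :
    (Fintype.card α - 2) * #{π : Perm α | π r = g (π a) (π b)} = (Fintype.card α).factorial := by
  rw [← sum_card_perm_apply_eq g hg hab, ← card_pair hab, ← card_compl, ← smul_eq_mul,
    ← sum_const]
  exact sum_congr rfl fun r' hr' => card_perm_apply_eq_eq_of_notMem g hr (mem_compl.1 hr')

theorem card_sub_two_mul_card_perm_symm_apply_mem [Fintype α]
    (hg : ∀ x y, x ≠ y → g x y ≠ x ∧ g x y ≠ y) (hab : a ≠ b) (R : Finset α) :
    (Fintype.card α - 2) * #{π : Perm α | π.symm (g (π a) (π b)) ∈ R}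
      = #(R \ {a, b}) * (Fintype.card α).factorial := by
  have hmaps : ∀ π ∈ ({π : Perm α | π.symm (g (π a) (π b)) ∈ R} : Finset _),
      π.symm (g (π a) (π b)) ∈ R \ {a, b} := fun π hπ =>
    mem_sdiff.2 ⟨(mem_filter.1 hπ).2, symm_apply_notMem_pair g hg hab π⟩
  rw [card_eq_sum_card_fiberwise hmaps, mul_sum, ← smul_eq_mul, ← sum_const]
  refine sum_congr rfl fun r hr => ?_
  rw [filter_filter, ← card_sub_two_mul_card_perm_apply_eq g hg hab (mem_sdiff.1 hr).2]
  congr 2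
  refine filter_congr fun π _ => ?_
  rw [π.symm_apply_eq, eq_comm]
  exact ⟨And.right, fun h => ⟨by simpa [← h] using (mem_sdiff.1 hr).1, h⟩⟩

end

theorem cast_sub_two_pos {n : ℕ} (hn : 3 ≤ n) : (0 : ℝ) < n - 2 := by
  have : (3 : ℝ) ≤ n := by exact_mod_cast hn
  linarith

theorem prod_card_Ioi {M : Type*} [CommMonoid M] (n : ℕ) (f : ℕ → M) :
    ∏ K : Fin n, f #(Ioi K) = ∏ j ∈ range n, f j :=
  calc ∏ K : Fin n, f #(Ioi K) = ∏ K : Fin n, f (Fin.rev K) :=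
        prod_congr rfl fun K _ => by rw [Fin.card_Ioi, Fin.val_rev, Nat.sub_sub, add_comm]
    _ = ∏ K : Fin n, f K := Equiv.prod_comp Fin.revPerm fun K => f K
    _ = ∏ j ∈ range n, f j := Fin.prod_univ_eq_prod_range f n

section LatinSquare

variable {n : ℕ} {L : Fin n → Fin n → Fin n} {σ : Perm (Fin n)}

noncomputable def symbolRow (hσ : IsTransversal L σ) (i u : Fin n) : Fin n :=
  (Equiv.ofBijective _ hσ).symm (L i (σ u))

theorem symbolRow_eq_iff (hσ : IsTransversal L σ) {i u w : Fin n} :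
    symbolRow hσ i u = w ↔ L i (σ u) = L w (σ w) :=
  (Equiv.ofBijective _ hσ).symm_apply_eq

theorem symbolRow_self (hσ : IsTransversal L σ) (i : Fin n) : symbolRow hσ i i = i :=
  (symbolRow_eq_iff hσ).2 rfl

theorem symbolRow_ne (hL : IsLatinSquare L) (hσ : IsTransversal L σ) {i u : Fin n} (hiu : i ≠ u) :
    symbolRow hσ i u ≠ i ∧ symbolRow hσ i u ≠ u := by
  simp only [ne_eq, symbolRow_eq_iff]
  exact ⟨fun h => hiu (σ.injective ((hL.1 i).injective h)).symm,
    fun h => hiu ((hL.2 (σ u)).injective h)⟩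

variable (L) in
/-- Row `π m` is the `m`-th row visited and has received column `f m`; these are the columns
left open to row `π K`. -/
def availableColumns (π : Perm (Fin n)) (f : Fin n → Fin n) (K : Fin n) : Finset (Fin n) :=
  {j | ∀ m < K, f m ≠ j ∧ L (π m) (f m) ≠ L (π K) j}

theorem availableColumns_congr (π : Perm (Fin n)) (K : Fin n) {f g : Fin n → Fin n}
    (h : ∀ m < K, f m = g m) : availableColumns L π f K = availableColumns L π g K :=
  filter_congr fun j _ => forall₂_congr fun m hm => by rw [h m hm]

theorem apply_mem_availableColumns_iff (hσ : IsTransversal L σ) (π : Perm (Fin n)) (K p : Fin n) :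
    σ (π p) ∈ availableColumns L π (σ ∘ π) K ↔ K ≤ p ∧ K ≤ π.symm (symbolRow hσ (π K) (π p)) := by
  set q := π.symm (symbolRow hσ (π K) (π p))
  have hsymbol : ∀ m, L (π m) (σ (π m)) ≠ L (π K) (σ (π p)) ↔ m ≠ q := fun m => by
    rw [ne_eq, ne_eq, π.eq_symm_apply, eq_comm (a := π m), symbolRow_eq_iff, eq_comm]
  simp only [availableColumns, mem_filter, mem_univ, true_and, Function.comp_apply,
    σ.injective.ne_iff, π.injective.ne_iff, hsymbol]
  constructor
  · intro h
    exact ⟨not_lt.1 fun hp => (h p hp).1 rfl, not_lt.1 fun hq => (h q hq).2 rfl⟩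
  · rintro ⟨hp, hq⟩ m hm
    exact ⟨(hm.trans_le hp).ne, (hm.trans_le hq).ne⟩

theorem apply_apply_mem_availableColumns (hσ : IsTransversal L σ) (π : Perm (Fin n)) (K : Fin n) :
    σ (π K) ∈ availableColumns L π (σ ∘ π) K :=
  (apply_mem_availableColumns_iff hσ π K K).2 ⟨le_rfl, by rw [symbolRow_self, π.symm_apply_apply]⟩

open Classical in
theorem sum_prod_inv_card_availableColumns_le_one (π : Perm (Fin n)) :
    ∑ σ ∈ {σ | IsTransversal L σ}, ∏ K, ((#(availableColumns L π (σ ∘ π) K) : ℝ))⁻¹ ≤ 1 := by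
  have hinj : Set.InjOn (fun σ : Perm (Fin n) => (σ ∘ π : Fin n → Fin n))
      ({σ | IsTransversal L σ} : Finset _) := fun σ _ τ _ h =>
    Equiv.ext fun x => by simpa using congrFun h (π.symm x)
  rw [← sum_image (f := fun f => ∏ K, ((#(availableColumns L π f K) : ℝ))⁻¹) hinj]
  refine sum_prod_inv_card_le_one _ _ (fun K f g h => availableColumns_congr π K h) ?_
  simp only [mem_image, mem_filter, mem_univ, true_and, forall_exists_index, and_imp]
  rintro _ σ hσ rfl K
  exact apply_apply_mem_availableColumns hσ π K

theorem card_availableColumns (hσ : IsTransversal L σ) (π : Perm (Fin n)) (K : Fin n) :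
    #(availableColumns L π (σ ∘ π) K)
      = #{p ∈ Ici K | K ≤ π.symm (symbolRow hσ (π K) (π p))} :=
  (card_equiv (π.trans σ) fun p => by
    simp [apply_mem_availableColumns_iff hσ]).symm

theorem sub_two_mul_sum_card_availableColumns (hL : IsLatinSquare L) (hσ : IsTransversal L σ)
    (K : Fin n) :
    (n - 2) * ∑ π : Perm (Fin n), #(availableColumns L π (σ ∘ π) K)
      = (n - 2 + #(Ioi K) * (#(Ioi K) - 1)) * n.factorial := by
  have hswap : ∑ π : Perm (Fin n), #(availableColumns L π (σ ∘ π) K)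
      = ∑ p ∈ Ici K, #{π : Perm (Fin n) | K ≤ π.symm (symbolRow hσ (π K) (π p))} := by
    simp only [card_availableColumns hσ]
    exact sum_card_bipartiteAbove_eq_sum_card_bipartiteBelow _
  have hK : #{π : Perm (Fin n) | K ≤ π.symm (symbolRow hσ (π K) (π K))} = n.factorial := by
    simp [symbolRow_self, Fintype.card_perm]
  have hp : ∀ p ∈ Ioi K,
      (n - 2) * #{π : Perm (Fin n) | K ≤ π.symm (symbolRow hσ (π K) (π p))}
        = (#(Ioi K) - 1) * n.factorial := by
    intro p hp
    have hKp : K ≠ p := (mem_Ioi.1 hp).ne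
    have := card_sub_two_mul_card_perm_symm_apply_mem (symbolRow hσ)
      (fun x y hxy => symbolRow_ne hL hσ hxy) hKp (Ici K)
    simp only [mem_Ici, Fintype.card_fin] at this
    rw [this, card_sdiff_of_subset (by simp [insert_subset_iff, (mem_Ioi.1 hp).le]),
      card_pair hKp, Fin.card_Ici, Fin.card_Ioi]
    congr 1
    omega
  rw [hswap, ← Ioi_insert, sum_insert (by simp), hK, mul_add, mul_sum, sum_congr rfl hp,
    sum_const, smul_eq_mul]
  ring

theorem sum_card_availableColumns_le (hn : 3 ≤ n) (hL : IsLatinSquare L)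
    (hσ : IsTransversal L σ) (K : Fin n) :
    ∑ π : Perm (Fin n), (#(availableColumns L π (σ ∘ π) K) : ℝ)
      ≤ n.factorial * (1 + (#(Ioi K) : ℝ) ^ 2 / (n - 2)) := by
  have hle : (n - 2) * ∑ π : Perm (Fin n), #(availableColumns L π (σ ∘ π) K)
      ≤ (n - 2 + #(Ioi K) ^ 2) * n.factorial := by
    rw [sub_two_mul_sum_card_availableColumns hL hσ K, sq]
    gcongr
    exact Nat.sub_le _ _
  have hleR : ((n : ℝ) - 2) * ∑ π : Perm (Fin n), (#(availableColumns L π (σ ∘ π) K) : ℝ)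
      ≤ ((n : ℝ) - 2 + (#(Ioi K) : ℝ) ^ 2) * n.factorial := by
    have := (Nat.cast_le (α := ℝ)).2 hle
    push_cast [Nat.cast_sub (by omega : 2 ≤ n)] at this
    exact this
  calc _ ≤ ((n : ℝ) - 2 + (#(Ioi K) : ℝ) ^ 2) * n.factorial / (n - 2) :=
        (le_div_iff₀' (cast_sub_two_pos hn)).2 hleR
    _ = _ := by
        have := cast_sub_two_pos hn
        field_simp

theorem transversalCount_le_prod (hn : 3 ≤ n) (hL : IsLatinSquare L) :
    (transversalCount L : ℝ) ≤ ∏ K : Fin n, (1 + (#(Ioi K) : ℝ) ^ 2 / (n - 2)) := by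
  classical
  rw [transversalCount, Nat.card_eq_fintype_card, Fintype.card_subtype]
  refine card_le_prod_of_sum_prod_inv_le_one _
    (fun (π σ : Perm (Fin n)) K => (#(availableColumns L π (σ ∘ π) K) : ℝ)) _
    (fun K => add_nonneg zero_le_one (div_nonneg (sq_nonneg _) (cast_sub_two_pos hn).le))
    (fun π σ hσ K => ?_) sum_prod_inv_card_availableColumns_le_one fun σ hσ K => ?_
  · exact Nat.cast_pos.2 <|
      card_pos.2 ⟨_, apply_apply_mem_availableColumns (mem_filter.1 hσ).2 π K⟩
  · rw [Fintype.card_perm, Fintype.card_fin]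
    exact sum_card_availableColumns_le hn hL (mem_filter.1 hσ).2 K

end LatinSquare

section Asymptotics

open Real

theorem factorial_le_exp_one_mul_sqrt_mul {n : ℕ} (hn : n ≠ 0) :
    (n.factorial : ℝ) ≤ exp 1 * √n * (n / exp 1) ^ n := by
  have hseq : Stirling.stirlingSeq n ≤ exp 1 / √2 := by
    obtain ⟨m, rfl⟩ := Nat.exists_eq_succ_of_ne_zero hn
    simpa using Stirling.stirlingSeq'_antitone (Nat.zero_le m)
  have hpos : 0 < √(2 * n : ℝ) * (n / exp 1) ^ n := by
    have : (0 : ℝ) < n := by exact_mod_cast Nat.pos_of_ne_zero hn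
    positivity
  rw [Stirling.stirlingSeq, div_le_iff₀ hpos] at hseq
  calc (n.factorial : ℝ) ≤ exp 1 / √2 * (√(2 * n : ℝ) * (n / exp 1) ^ n) := hseq
    _ = exp 1 * √n * (n / exp 1) ^ n := by
        rw [sqrt_mul zero_le_two]
        field_simp

theorem factorial_le_exp_seven_mul_mul_sub_two_div_pow {n : ℕ} (hn : 3 ≤ n) :
    (n.factorial : ℝ) ≤ exp 7 * n * ((n - 2) / exp 1) ^ n := by
  have h3 : (3 : ℝ) ≤ n := by exact_mod_cast hn
  have hq := cast_sub_two_pos hn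
  have hbase : (n : ℝ) ≤ (n - 2) * exp (2 / (n - 2)) :=
    calc (n : ℝ) = (n - 2) * (2 / (n - 2) + 1) := by field_simp; ring
      _ ≤ (n - 2) * exp (2 / (n - 2)) := by gcongr; exact add_one_le_exp _
  have hexp : exp (2 / (n - 2)) ^ n ≤ exp 6 := by
    rw [← exp_nat_mul, exp_le_exp, mul_div_assoc', div_le_iff₀ hq]
    linarith
  calc (n.factorial : ℝ) ≤ exp 1 * √n * (n / exp 1) ^ n :=
        factorial_le_exp_one_mul_sqrt_mul (by omega)
    _ ≤ exp 1 * n * (((n - 2) * exp (2 / (n - 2))) / exp 1) ^ n := by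
        gcongr
        exact (sqrt_le_left (by linarith)).2 (by nlinarith)
    _ = exp 1 * n * exp (2 / (n - 2)) ^ n * ((n - 2) / exp 1) ^ n := by
        rw [mul_div_right_comm, mul_pow]
        ring
    _ ≤ exp 1 * n * exp 6 * ((n - 2) / exp 1) ^ n := by gcongr
    _ = exp 7 * n * ((n - 2) / exp 1) ^ n := by
        rw [show (7 : ℝ) = 1 + 6 by norm_num, exp_add]
        ring

theorem prod_range_one_add_div_le {s : ℝ} (hs : 0 < s) (n : ℕ) :
    ∏ j ∈ range n, (1 + j / s) ≤ n.factorial / s ^ n * exp (s * (1 + log n)) := by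
  have hfactor : ∀ j : ℕ, 1 + j / s ≤ (j + 1) / s * exp (s / (j + 1)) := fun j =>
    calc 1 + j / s ≤ (j + 1) / s * (s / (j + 1) + 1) := by
          field_simp
          linarith
      _ ≤ (j + 1) / s * exp (s / (j + 1)) := by gcongr; exact add_one_le_exp _
  calc ∏ j ∈ range n, (1 + j / s) ≤ ∏ j ∈ range n, ((j + 1) / s * exp (s / (j + 1))) :=
        prod_le_prod (fun j _ => by positivity) fun j _ => hfactor j
    _ = n.factorial / s ^ n * exp (s * harmonic n) := by
        rw [prod_mul_distrib, prod_div_distrib, ← exp_sum, prod_const, card_range, harmonic,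
          ← prod_range_add_one_eq_factorial]
        push_cast
        simp only [mul_sum, div_eq_mul_inv]
    _ ≤ n.factorial / s ^ n * exp (s * (1 + log n)) := by
        gcongr
        exact harmonic_le_one_add_log n

theorem prod_range_one_add_sq_div_le {q : ℝ} (hq : 0 < q) (n : ℕ) :
    ∏ j ∈ range n, (1 + (j : ℝ) ^ 2 / q)
      ≤ n.factorial ^ 2 * exp (2 * (√q * (1 + log n))) / q ^ n := by
  have hs : 0 < √q := sqrt_pos.2 hq
  calc ∏ j ∈ range n, (1 + (j : ℝ) ^ 2 / q) ≤ ∏ j ∈ range n, (1 + j / √q) ^ 2 :=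
        prod_le_prod (fun j _ => by positivity) fun j _ => by
          rw [add_sq, div_pow, sq_sqrt hq.le]
          have : 0 ≤ 2 * 1 * ((j : ℝ) / √q) := by positivity
          linarith
    _ = (∏ j ∈ range n, (1 + j / √q)) ^ 2 := prod_pow _ _ _
    _ ≤ (n.factorial / √q ^ n * exp (√q * (1 + log n))) ^ 2 :=
        pow_le_pow_left₀ (prod_nonneg fun j _ => by positivity) (prod_range_one_add_div_le hs n) 2
    _ = n.factorial ^ 2 * exp (2 * (√q * (1 + log n))) / q ^ n := by
        rw [mul_pow, div_pow, ← exp_nat_mul, ← pow_mul, mul_comm n 2, pow_mul, sq_sqrt hq.le]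
        push_cast
        ring

theorem isLittleO_sqrt_mul_one_add_log : (fun x : ℝ => √x * (1 + log x)) =o[atTop] id := by
  have hlog : (fun x : ℝ => 1 + log x) =o[atTop] fun x => x ^ (1 / 2 : ℝ) :=
    ((isLittleO_one_left_iff ℝ).2
      (tendsto_norm_atTop_atTop.comp (tendsto_rpow_atTop (by norm_num)))).add
      (isLittleO_log_rpow_atTop (by norm_num))
  refine ((isBigO_refl (fun x : ℝ => x ^ (1 / 2 : ℝ)) atTop).mul_isLittleO hlog).congr' ?_ ?_
  · filter_upwards with x
    rw [sqrt_eq_rpow]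
  · filter_upwards [eventually_ge_atTop 0] with x hx
    rw [← rpow_add' hx (by norm_num)]
    norm_num

theorem eventually_prod_one_add_sq_div_le {ε : ℝ} (hε : 0 < ε) :
    ∀ᶠ n : ℕ in atTop,
      ∏ j ∈ range n, (1 + (j : ℝ) ^ 2 / (n - 2)) ≤ ((1 + ε) / exp 1) ^ n * n.factorial := by
  have hsubexp : ∀ᶠ n : ℕ in atTop, 7 + log n + 2 * (√n * (1 + log n)) ≤ log (1 + ε) * n := by
    have h := ((isLittleO_const_id_atTop (7 : ℝ)).add isLittleO_log_id_atTop).add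
      (isLittleO_sqrt_mul_one_add_log.const_mul_left 2)
    filter_upwards [tendsto_natCast_atTop_atTop.eventually
      (h.bound (log_pos (by linarith : 1 < 1 + ε)))] with n hn
    simpa using (le_abs_self _).trans hn
  filter_upwards [eventually_ge_atTop 3, hsubexp] with n hn hsubexp
  have h3 : (3 : ℝ) ≤ n := by exact_mod_cast hn
  have hq := cast_sub_two_pos hn
  have hlog : 0 ≤ 1 + log n := by linarith [log_nonneg (by linarith : (1 : ℝ) ≤ n)]
  calc ∏ j ∈ range n, (1 + (j : ℝ) ^ 2 / (n - 2))
      ≤ n.factorial * n.factorial * exp (2 * (√(n - 2) * (1 + log n))) / (n - 2) ^ n := by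
        rw [← sq]
        exact prod_range_one_add_sq_div_le hq n
    _ ≤ n.factorial * (exp 7 * n * ((n - 2) / exp 1) ^ n) * exp (2 * (√n * (1 + log n)))
          / (n - 2) ^ n := by
        gcongr
        · exact factorial_le_exp_seven_mul_mul_sub_two_div_pow hn
        · linarith
    _ = n.factorial * exp (7 + log n + 2 * (√n * (1 + log n))) / exp 1 ^ n := by
        rw [exp_add, exp_add, exp_log (by linarith), div_pow]
        field_simp
    _ ≤ n.factorial * exp (log (1 + ε) * n) / exp 1 ^ n := by gcongr
    _ = ((1 + ε) / exp 1) ^ n * n.factorial := by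
        rw [mul_comm (log _), exp_nat_mul, exp_log (by linarith), div_pow]
        ring

end Asymptotics

theorem latin_square_transversal_upper_bound_factorial :
    ∀ ε : ℝ, 0 < ε → ∃ N₀ : ℕ, ∀ n : ℕ, N₀ ≤ n →
      ∀ L : Fin n → Fin n → Fin n, IsLatinSquare L →
        (transversalCount L : ℝ) ≤ ((1 + ε) / Real.exp 1) ^ n * (Nat.factorial n) := by
  intro ε hε
  obtain ⟨N₀, hN₀⟩ :=
    eventually_atTop.1 ((eventually_prod_one_add_sq_div_le hε).and (eventually_ge_atTop 3))
  refine ⟨N₀, fun n hn L hL => ?_⟩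
  obtain ⟨hprod, hn3⟩ := hN₀ n hn
  calc (transversalCount L : ℝ) ≤ ∏ K : Fin n, (1 + (#(Ioi K) : ℝ) ^ 2 / (n - 2)) :=
        transversalCount_le_prod hn3 hL
    _ = ∏ j ∈ range n, (1 + (j : ℝ) ^ 2 / (n - 2)) :=
        prod_card_Ioi n fun j => 1 + (j : ℝ) ^ 2 / (n - 2)
    _ ≤ _ := hprod
end

section
/- Let d ≥ 2, let A be an order-n d-dimensional Latin hypercube in 0-1 representation, let X be a transversal of A, and fix i ∈ {1,…,n}. Let V be the set of 1-elements x of A with first coordinate x₁ = i, and let U be the set of those v ∈ V for which there exists an element of X agreeing with v in at least two coordinates. Then |U| ≤ d²·n^{d−2}. -/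
/-- An order-`n` `d`-dimensional Latin hypercube in 0-1 representation: a
predicate on `[n]^(d+1)` such that every line (fix all coordinates but one and
let the free coordinate vary) contains exactly one point where `A` holds. -/
def IsLatinHypercube (d n : ℕ) (A : (Fin (d + 1) → Fin n) → Prop) : Prop :=
  ∀ (k : Fin (d + 1)) (x : Fin (d + 1) → Fin n), ∃! c : Fin n, A (Function.update x k c)

/-- A transversal of `A`: a set of 1-elements of `A` containing, for every
coordinate `k` and every value `c`, exactly one point `x` with `x k = c`
(hence exactly one point from each hyperplane). -/
def IsHCTransversal (d n : ℕ) (A : (Fin (d + 1) → Fin n) → Prop)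
    (X : Finset (Fin (d + 1) → Fin n)) : Prop :=
  (∀ x ∈ X, A x) ∧
    ∀ (k : Fin (d + 1)) (c : Fin n), ∃! x : Fin (d + 1) → Fin n, x ∈ X ∧ x k = c

/-- The number of transversals of the hypercube `A`. -/
noncomputable def hcTransversalCount (d n : ℕ) (A : (Fin (d + 1) → Fin n) → Prop) : ℕ :=
  Nat.card {X : Finset (Fin (d + 1) → Fin n) // IsHCTransversal d n A X}

open Finset

lemma count_fixed {d n : ℕ} {A : (Fin (d + 1) → Fin n) → Prop} [DecidablePred A]
    (hA : IsLatinHypercube d n A) (S : Finset (Fin (d + 1))) (hS : S ≠ univ)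
    (f : Fin (d + 1) → Fin n) :
    (univ.filter (fun v => A v ∧ ∀ j ∈ S, v j = f j)).card ≤ n ^ (d - S.card) := by
  classical
  obtain ⟨k₀, hk₀⟩ : ∃ k₀, k₀ ∉ S := by
    by_contra h; push_neg at h; exact hS (eq_univ_of_forall h)
  set T : Finset (Fin (d + 1)) := univ \ insert k₀ S with hT
  have key : (univ.filter (fun v => A v ∧ ∀ j ∈ S, v j = f j)).card
      ≤ (univ : Finset (↥T → Fin n)).card := by
    apply Finset.card_le_card_of_injOn (fun v (j : ↥T) => v (j : Fin (d+1)))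
      (fun _ _ => mem_univ _)
    intro v hv w hw h
    simp only [coe_filter, Set.mem_setOf_eq, mem_univ, true_and] at hv hw
    have hvw : ∀ j, j ≠ k₀ → v j = w j := by
      intro j hj
      by_cases hjS : j ∈ S
      · rw [hv.2 j hjS, hw.2 j hjS]
      · have hjT : j ∈ T := by simp [hT, hj, hjS]
        exact congrFun h ⟨j, hjT⟩
    have hw' : w = Function.update v k₀ (w k₀) := by
      funext j
      by_cases hj : j = k₀
      · subst hj; simp
      · rw [Function.update_of_ne hj]; exact (hvw j hj).symm
    obtain ⟨c, _, hu⟩ := hA k₀ v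
    have h1 : v k₀ = c := hu (v k₀)
      (show A (Function.update v k₀ (v k₀)) by rw [Function.update_eq_self]; exact hv.1)
    have h2 : w k₀ = c := hu (w k₀)
      (show A (Function.update v k₀ (w k₀)) by rw [← hw']; exact hw.1)
    funext j
    by_cases hj : j = k₀
    · subst hj; rw [h1, h2]
    · exact hvw j hj
  have hST : T.card = d - S.card := by
    show (univ \ insert k₀ S).card = d - S.card
    have h1 : (insert k₀ S).card = S.card + 1 := card_insert_of_notMem hk₀
    have h2 : (univ : Finset (Fin (d+1))).card = d + 1 := by simp
    have h3 : insert k₀ S ⊆ univ := subset_univ _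
    rw [card_sdiff_of_subset h3, h1, h2]
    exact Nat.succ_sub_succ d S.card
  have hcard : (univ : Finset (↥T → Fin n)).card = n ^ (d - S.card) := by
    rw [card_univ, Fintype.card_fun, Fintype.card_fin, Fintype.card_coe, hST]
  exact hcard ▸ key

lemma pair_bound {d n : ℕ} (hd : 2 ≤ d) {A : (Fin (d + 1) → Fin n) → Prop} [DecidablePred A]
    (hA : IsLatinHypercube d n A) {X : Finset (Fin (d + 1) → Fin n)}
    (hX : IsHCTransversal d n A X) (i : Fin n) {k k' : Fin (d + 1)} (hkk' : k < k') :
    (univ.filter (fun v => A v ∧ v 0 = i ∧ ∃ x ∈ X, v k = x k ∧ v k' = x k')).card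
      ≤ n ^ (d - 2) := by
  classical
  have hkne : k ≠ k' := ne_of_lt hkk'
  have hk'0 : k' ≠ 0 := by
    intro h
    subst h
    exact absurd hkk' (by simp [Fin.lt_def])
  obtain ⟨x₀, ⟨hx₀X, hx₀⟩, hx₀u⟩ := hX.2 0 i
  by_cases hk0 : k = 0
  · -- the pair contains the coordinate 0
    subst hk0
    have hsub : (univ.filter (fun v => A v ∧ v 0 = i ∧ ∃ x ∈ X, v 0 = x 0 ∧ v k' = x k'))
        ⊆ univ.filter (fun v => A v ∧ ∀ j ∈ ({0, k'} : Finset (Fin (d + 1))), v j =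
            Function.update (fun _ => i) k' (x₀ k') j) := by
      intro v hv
      simp only [mem_filter, mem_univ, true_and] at hv ⊢
      obtain ⟨hAv, hv0, x, hxX, hvk, hvk'⟩ := hv
      refine ⟨hAv, ?_⟩
      have hx0 : x = x₀ := hx₀u x ⟨hxX, by rw [← hvk, hv0]⟩
      intro j hj
      rcases mem_insert.1 hj with rfl | hj
      · rw [hv0, Function.update_of_ne (Ne.symm hk'0)]
      · rw [mem_singleton] at hj
        subst hj
        rw [hvk', hx0, Function.update_self]
    have hScard : ({0, k'} : Finset (Fin (d + 1))).card = 2 := by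
      rw [card_insert_of_notMem (by simp [Ne.symm hk'0]), card_singleton]
    have hSne : ({0, k'} : Finset (Fin (d + 1))) ≠ univ := by
      intro h
      have := congrArg Finset.card h
      rw [hScard, card_univ, Fintype.card_fin] at this
      omega
    calc _ ≤ _ := card_le_card hsub
      _ ≤ n ^ (d - ({0, k'} : Finset (Fin (d + 1))).card) := count_fixed hA _ hSne _
      _ = n ^ (d - 2) := by rw [hScard]
  · -- both k and k' are nonzero
    rcases eq_or_lt_of_le hd with hd2 | hd3
    · -- d = 2
      have hsub : (univ.filter (fun v => A v ∧ v 0 = i ∧ ∃ x ∈ X, v k = x k ∧ v k' = x k'))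
          ⊆ {x₀} := by
        intro v hv
        simp only [mem_filter, mem_univ, true_and] at hv
        obtain ⟨hAv, hv0, x, hxX, hvk, hvk'⟩ := hv
        have hvx : ∀ j, j ≠ 0 → v j = x j := by
          intro j hj
          have hjk : j = k ∨ j = k' := by
            have h1 : (k : ℕ) < (k' : ℕ) := hkk'
            have h2 : (j : ℕ) < d + 1 := j.isLt
            have h3 : (k' : ℕ) < d + 1 := k'.isLt
            have h4 : (k : ℕ) ≠ 0 := fun h => hk0 (Fin.ext (by simpa using h))
            have h5 : (j : ℕ) ≠ 0 := fun h => hj (Fin.ext (by simpa using h))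
            have h6 : (j : ℕ) = (k : ℕ) ∨ (j : ℕ) = (k' : ℕ) := by omega
            rcases h6 with h6 | h6
            · exact Or.inl (Fin.ext h6)
            · exact Or.inr (Fin.ext h6)
          rcases hjk with rfl | rfl
          · exact hvk
          · exact hvk'
        have hvux : v = Function.update x 0 (v 0) := by
          funext j
          by_cases hj : j = 0
          · subst hj; simp
          · rw [Function.update_of_ne hj]; exact hvx j hj
        obtain ⟨c, _, hu⟩ := hA 0 x
        have h1 : v 0 = c := hu (v 0)
          (show A (Function.update x 0 (v 0)) by rw [← hvux]; exact hAv)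
        have h2 : x 0 = c := hu (x 0)
          (show A (Function.update x 0 (x 0)) by
            rw [Function.update_eq_self]; exact hX.1 x hxX)
        have hvxeq : v = x := by
          rw [hvux, h1, ← h2, Function.update_eq_self]
        have hxx₀ : x = x₀ := hx₀u x ⟨hxX, by rw [← hvxeq, hv0]⟩
        rw [mem_singleton, hvxeq, hxx₀]
      calc _ ≤ ({x₀} : Finset (Fin (d + 1) → Fin n)).card := card_le_card hsub
        _ = 1 := card_singleton _
        _ ≤ n ^ (d - 2) := by rw [← hd2]; simp
    · -- d ≥ 3
      have hxa : ∀ a : Fin n, ∃ x, x ∈ X ∧ x k = a := fun a => (hX.2 k a).exists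
      have hg : ∀ a, (hxa a).choose ∈ X ∧ (hxa a).choose k = a := fun a => (hxa a).choose_spec
      set F : Fin n → Fin (d + 1) → Fin n := fun a =>
        Function.update (Function.update (fun _ => i) k a) k' ((hxa a).choose k') with hF
      have hsub : (univ.filter (fun v => A v ∧ v 0 = i ∧ ∃ x ∈ X, v k = x k ∧ v k' = x k'))
          ⊆ univ.biUnion (fun a : Fin n => univ.filter (fun v => A v ∧
              ∀ j ∈ ({0, k, k'} : Finset (Fin (d + 1))), v j = F a j)) := by
        intro v hv
        simp only [mem_filter, mem_univ, true_and, mem_biUnion] at hv ⊢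
        obtain ⟨hAv, hv0, x, hxX, hvk, hvk'⟩ := hv
        refine ⟨v k, hAv, ?_⟩
        obtain ⟨y, _, hyu⟩ := hX.2 k (v k)
        have hxy : x = (hxa (v k)).choose := by
          rw [hyu x ⟨hxX, hvk.symm⟩, hyu _ (hg (v k))]
        intro j hj
        have h0k : (0 : Fin (d + 1)) ≠ k := Ne.symm hk0
        have h0k' : (0 : Fin (d + 1)) ≠ k' := Ne.symm hk'0
        rcases mem_insert.1 hj with rfl | hj
        · rw [hv0, hF]
          simp only [Function.update_of_ne h0k', Function.update_of_ne h0k]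
        · rcases mem_insert.1 hj with rfl | hj
          · rw [hF]
            simp only [Function.update_of_ne hkne, Function.update_self]
          · rw [mem_singleton] at hj
            subst hj
            rw [hF]
            simp only [Function.update_self]
            rw [hvk', hxy]
      have h0notin : (0 : Fin (d + 1)) ∉ ({k, k'} : Finset (Fin (d + 1))) := by
        simp only [mem_insert, mem_singleton]
        push_neg
        exact ⟨Ne.symm hk0, Ne.symm hk'0⟩
      have hScard : ({0, k, k'} : Finset (Fin (d + 1))).card = 3 := by
        rw [card_insert_of_notMem h0notin,
          card_insert_of_notMem (by simpa using hkne), card_singleton]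
      have hSne : ({0, k, k'} : Finset (Fin (d + 1))) ≠ univ := by
        intro h
        have := congrArg Finset.card h
        rw [hScard, card_univ, Fintype.card_fin] at this
        omega
      calc _ ≤ _ := card_le_card hsub
        _ ≤ ∑ a : Fin n, (univ.filter (fun v => A v ∧
              ∀ j ∈ ({0, k, k'} : Finset (Fin (d + 1))), v j = F a j)).card :=
          card_biUnion_le
        _ ≤ ∑ _a : Fin n, n ^ (d - 3) := by
          refine Finset.sum_le_sum fun a _ => ?_
          have := count_fixed hA ({0, k, k'} : Finset (Fin (d + 1))) hSne (F a)
          rwa [hScard] at this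
        _ = n * n ^ (d - 3) := by
          rw [Finset.sum_const, card_univ, Fintype.card_fin, smul_eq_mul]
        _ = n ^ (d - 2) := by
          rw [← pow_succ']
          congr 1
          omega

/-- Claim 1: if `X` is a transversal of the Latin hypercube `A` and `i` is a fixed
value of the first coordinate, then the set `U` of 1-elements `v` of `A` with
first coordinate `i` that agree with some element of `X` in at least two
coordinates has size at most `d² · n^(d-2)`. -/
theorem sharing_two_indices_bound (d n : ℕ) (hd : 2 ≤ d)
    (A : (Fin (d + 1) → Fin n) → Prop) (hA : IsLatinHypercube d n A)
    (X : Finset (Fin (d + 1) → Fin n)) (hX : IsHCTransversal d n A X) (i : Fin n) :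
    Set.ncard {v : Fin (d + 1) → Fin n | A v ∧ v 0 = i ∧
        ∃ x ∈ X, ∃ k k' : Fin (d + 1), k ≠ k' ∧ v k = x k ∧ v k' = x k'}
      ≤ d ^ 2 * n ^ (d - 2) := by
  classical
  rw [Set.ncard_eq_toFinset_card', Set.toFinset_setOf]
  set P : Finset (Fin (d + 1) × Fin (d + 1)) :=
    univ.filter (fun p => p.1 < p.2) with hP
  have hsub : (univ.filter (fun v : Fin (d + 1) → Fin n => A v ∧ v 0 = i ∧
        ∃ x ∈ X, ∃ k k' : Fin (d + 1), k ≠ k' ∧ v k = x k ∧ v k' = x k'))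
      ⊆ P.biUnion (fun p => univ.filter (fun v => A v ∧ v 0 = i ∧
          ∃ x ∈ X, v p.1 = x p.1 ∧ v p.2 = x p.2)) := by
    intro v hv
    simp only [mem_filter, mem_univ, true_and, mem_biUnion] at hv ⊢
    obtain ⟨hAv, hv0, x, hxX, k, k', hkne, hvk, hvk'⟩ := hv
    rcases lt_or_gt_of_ne hkne with h | h
    · exact ⟨(k, k'), by simp [hP, h], hAv, hv0, x, hxX, hvk, hvk'⟩
    · exact ⟨(k', k), by simp [hP, h], hAv, hv0, x, hxX, hvk', hvk⟩
  have hPcard : P.card ≤ d ^ 2 := by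
    have : P.card ≤ ((range d) ×ˢ (range d)).card := by
      apply card_le_card_of_injOn (fun p => ((p.1 : ℕ), (p.2 : ℕ) - 1))
      · intro p hp
        simp only [hP, mem_coe, mem_filter, mem_univ, true_and] at hp
        have h1 : (p.1 : ℕ) < (p.2 : ℕ) := hp
        have h2 : (p.2 : ℕ) < d + 1 := p.2.isLt
        simp only [mem_coe, mem_product, mem_range]
        omega
      · intro p hp q hq h
        simp only [hP, coe_filter, Set.mem_setOf_eq, mem_univ, true_and] at hp hq
        have hp1 : (p.1 : ℕ) < (p.2 : ℕ) := hp
        have hq1 : (q.1 : ℕ) < (q.2 : ℕ) := hq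
        have h1 : (p.1 : ℕ) = (q.1 : ℕ) := congrArg Prod.fst h
        have h2 : (p.2 : ℕ) - 1 = (q.2 : ℕ) - 1 := congrArg Prod.snd h
        have h3 : (p.2 : ℕ) = (q.2 : ℕ) := by omega
        exact Prod.ext (Fin.ext h1) (Fin.ext h3)
    rw [card_product, card_range] at this
    calc P.card ≤ d * d := this
      _ = d ^ 2 := (sq d).symm
  calc _ ≤ _ := card_le_card hsub
    _ ≤ ∑ p ∈ P, (univ.filter (fun v => A v ∧ v 0 = i ∧
          ∃ x ∈ X, v p.1 = x p.1 ∧ v p.2 = x p.2)).card := card_biUnion_le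
    _ ≤ ∑ _p ∈ P, n ^ (d - 2) := by
      refine Finset.sum_le_sum fun p hp => ?_
      have hplt : p.1 < p.2 := by simpa [hP] using hp
      exact pair_bound hd hA hX i hplt
    _ = P.card * n ^ (d - 2) := by rw [Finset.sum_const, smul_eq_mul]
    _ ≤ d ^ 2 * n ^ (d - 2) := Nat.mul_le_mul_right _ hPcard
end

section
/- Let L be an order-N Latin square, let s ≥ 3, and let T₁, …, T_s be pairwise disjoint transversals of L (disjoint as sets of cells). Suppose L has at least t transversals that contain no cell of T₁ ∪ ⋯ ∪ T_s. Then there exists an order-(N+s) Latin square with at least t transversals. -/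
lemma zmod_block (s : ℕ) (hs : 3 ≤ s) :
    ∃ (Q : Fin s → Fin s → Fin s) (τ : Equiv.Perm (Fin s)),
      (∀ a, Function.Bijective (Q a)) ∧ (∀ b, Function.Bijective fun a => Q a b) ∧
      Function.Bijective fun a => Q a (τ a) := by
  haveI : NeZero s := ⟨by omega⟩
  suffices h : ∃ (Q' : ZMod s → ZMod s → ZMod s) (τf : ZMod s → ZMod s),
      Function.Bijective τf ∧ (∀ a, Function.Bijective (Q' a)) ∧
      (∀ b, Function.Bijective fun a => Q' a b) ∧
      Function.Bijective fun a => Q' a (τf a) by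
    obtain ⟨Q', τf, hτ, hrow, hcol, hdiag⟩ := h
    let e : ZMod s ≃ Fin s := Fintype.equivFinOfCardEq (ZMod.card s)
    refine ⟨fun a b => e (Q' (e.symm a) (e.symm b)),
      (e.symm.trans (Equiv.ofBijective τf hτ)).trans e, fun a => ?_, fun b => ?_, ?_⟩
    · exact e.bijective.comp ((hrow _).comp e.symm.bijective)
    · exact e.bijective.comp (((hcol (e.symm b)).comp e.symm.bijective))
    · have heq : (fun a => e (Q' (e.symm a) (e.symm (((e.symm.trans
            (Equiv.ofBijective τf hτ)).trans e) a))))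
          = fun a => e (Q' (e.symm a) (τf (e.symm a))) := by
        funext a; simp [Equiv.ofBijective]
      show Function.Bijective fun a => e (Q' (e.symm a) (e.symm _))
      rw [heq]
      exact e.bijective.comp ((hdiag.comp e.symm.bijective))
  rcases em (2 ∣ s) with hev | hodd
  · -- even case
    obtain ⟨m, rfl⟩ := hev
    have hm : 2 ≤ m := by omega
    set n := 2 * m with hn
    haveI : Fact (1 < n) := ⟨by omega⟩
    have hms : m < n := by omega
    set m' : ZMod n := ((m : ℕ) : ZMod n) with hm'
    have hvm : m'.val = m := ZMod.val_cast_of_lt hms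
    have hvlt : ∀ x : ZMod n, x.val < n := fun x => ZMod.val_lt x
    have hm'0 : m' ≠ 0 := by
      intro h; have := congrArg ZMod.val h; rw [hvm, ZMod.val_zero] at this; omega
    have hmm : m' + m' = 0 := by
      have h2 : ((m + m : ℕ) : ZMod n) = 0 := by
        rw [show m + m = n by omega, ZMod.natCast_self]
      push_cast at h2; exact h2
    have horder2 : ∀ x : ZMod n, x + x = 0 → x = 0 ∨ x = m' := by
      intro x hx
      have hv := congrArg ZMod.val hx
      rw [ZMod.val_add, ZMod.val_zero] at hv
      have hxl := hvlt x
      have : x.val = 0 ∨ x.val = m := by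
        rcases Nat.lt_or_ge (x.val + x.val) n with hlt | hge
        · rw [Nat.mod_eq_of_lt hlt] at hv; omega
        · rw [Nat.mod_eq_sub_mod hge, Nat.mod_eq_of_lt (by omega)] at hv
          omega
      rcases this with h0 | h0
      · exact Or.inl (ZMod.val_injective n (by rw [h0, ZMod.val_zero]))
      · exact Or.inr (ZMod.val_injective n (by rw [h0, hvm]))
    have hvaddm : ∀ x : ZMod n, (x + m').val = if x.val < m then x.val + m else x.val - m := by
      intro x
      rw [ZMod.val_add, hvm]
      have := hvlt x
      split_ifs with h
      · rw [Nat.mod_eq_of_lt (by omega)]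
      · rw [Nat.mod_eq_sub_mod (by omega), Nat.mod_eq_of_lt (by omega)]; omega
    have hswap : ∀ x : ZMod n, Equiv.swap (0 : ZMod n) m' x
        = x + (if x = 0 ∨ x = m' then m' else 0) := by
      intro x
      rcases em (x = 0) with h0 | h0
      · subst h0; simp [Equiv.swap_apply_left]
      rcases em (x = m') with h1 | h1
      · subst h1; simp [Equiv.swap_apply_right, hmm, h0]
      · rw [Equiv.swap_apply_of_ne_of_ne h0 h1]; simp [h0, h1]
    set swp := Equiv.swap (0 : ZMod n) m' with hswp
    have hvsucc : ∀ x : ZMod n, (x + 1).val = (x.val + 1) % n := by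
      intro x; rw [ZMod.val_add, ZMod.val_one]
    refine ⟨fun a b => if a = 0 ∨ a = m' then a + swp b else a + b,
      fun i => if i = 0 then m' else if i.val < m then i else i + 1, ?_, ?_, ?_, ?_⟩
    · -- τf bijective
      rw [← Finite.injective_iff_bijective]
      have hcontra : ∀ x y : ZMod n, x ≠ 0 → x.val < m → ¬ y.val < m → x ≠ y + 1 := by
        intro x y hx0 hxm hym hxy
        have hv := congrArg ZMod.val hxy
        rw [hvsucc] at hv
        have := hvlt y
        rcases Nat.lt_or_ge (y.val + 1) n with hlt | hge
        · rw [Nat.mod_eq_of_lt hlt] at hv; omega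
        · rw [show y.val + 1 = n by omega, Nat.mod_self] at hv
          exact hx0 (ZMod.val_injective n (by rw [hv, ZMod.val_zero]))
      have hcontra2 : ∀ y : ZMod n, y ≠ 0 → ¬ y.val < m → m' ≠ y + 1 := by
        intro y hy0 hym hxy
        have hv := congrArg ZMod.val hxy
        rw [hvsucc, hvm] at hv
        have := hvlt y
        rcases Nat.lt_or_ge (y.val + 1) n with hlt | hge
        · rw [Nat.mod_eq_of_lt hlt] at hv; omega
        · rw [show y.val + 1 = n by omega, Nat.mod_self] at hv; omega
      intro a b h
      simp only at h
      split_ifs at h with h1 h2 h3 h4 h5 h6 h7 h8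
      · rw [h1, h2]
      · exfalso
        have hv := congrArg ZMod.val h
        rw [hvm] at hv
        omega
      · exact absurd h (hcontra2 b h2 h3)
      · exfalso
        have hv := congrArg ZMod.val h
        rw [hvm] at hv
        omega
      · exact h
      · exact absurd h (hcontra a b h1 h4 h6)
      · exact absurd h.symm (hcontra2 a h1 h4)
      · exact absurd h.symm (hcontra b a h7 h8 h4)
      · exact add_right_cancel h
    · -- rows
      intro a
      show Function.Bijective fun b => if a = 0 ∨ a = m' then a + swp b else a + b
      split_ifs with h
      · exact (Equiv.addLeft a).bijective.comp swp.bijective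
      · exact (Equiv.addLeft a).bijective
    · -- columns
      intro b
      show Function.Bijective fun a => if a = 0 ∨ a = m' then a + swp b else a + b
      rcases em (b = 0 ∨ b = m') with hb | hb
      · have heq : (fun a : ZMod n => if a = 0 ∨ a = m' then a + swp b else a + b)
            = fun a => swp a + b := by
          funext a
          rw [hswap a, hswap b, if_pos hb]
          split_ifs with ha <;> ring
        rw [heq]
        exact (Equiv.addRight b).bijective.comp swp.bijective
      · have hsb : swp b = b := by rw [hswap b, if_neg hb]; ring
        have heq : (fun a : ZMod n => if a = 0 ∨ a = m' then a + swp b else a + b)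
            = fun a => a + b := by
          funext a; rw [hsb]; split_ifs <;> rfl
        rw [heq]
        exact (Equiv.addRight b).bijective
    · -- diagonal
      have hm1ne0 : m' + 1 ≠ 0 := by
        intro h
        have := congrArg ZMod.val h
        rw [hvsucc, hvm, ZMod.val_zero, Nat.mod_eq_of_lt (by omega)] at this
        omega
      have hm1nem : m' + 1 ≠ m' := by
        intro h
        have := congrArg ZMod.val h
        rw [hvsucc, hvm, Nat.mod_eq_of_lt (by omega)] at this
        omega
      have heq : (fun a : ZMod n => if a = 0 ∨ a = m' then
            a + swp (if a = 0 then m' else if a.val < m then a else a + 1)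
          else a + (if a = 0 then m' else if a.val < m then a else a + 1))
          = fun a => a + a + (if a.val < m then 0 else 1) := by
        funext a
        rcases em (a = 0) with h0 | h0
        · subst h0
          rw [if_pos (Or.inl rfl), if_pos rfl,
            show swp m' = 0 from Equiv.swap_apply_right _ _,
            if_pos (by rw [ZMod.val_zero]; omega)]
          ring
        rcases em (a = m') with h1 | h1
        · subst h1
          rw [if_pos (Or.inr rfl), if_neg h0, if_neg (by omega : ¬ m'.val < m),
            show swp (m' + 1) = m' + 1 from Equiv.swap_apply_of_ne_of_ne hm1ne0 hm1nem,
            if_neg (by omega : ¬ m'.val < m)]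
          ring
        · rw [if_neg (by tauto), if_neg h0]
          split_ifs <;> ring
      show Function.Bijective fun a : ZMod n => if a = 0 ∨ a = m' then
            a + swp (if a = 0 then m' else if a.val < m then a else a + 1)
          else a + (if a = 0 then m' else if a.val < m then a else a + 1)
      rw [heq, ← Finite.injective_iff_bijective]
      intro a b h
      simp only at h
      have hpar : ∀ x : ZMod n, (x + x).val % 2 = 0 := by
        intro x
        rw [ZMod.val_add, Nat.mod_mod_of_dvd _ ⟨m, hn⟩]
        omega
      have hpar1 : ∀ x : ZMod n, (x + x + 1).val % 2 = 1 := by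
        intro x
        rw [hvsucc, Nat.mod_mod_of_dvd _ ⟨m, hn⟩]
        have := hpar x
        omega
      have hsame : a + a = b + b → a = b → True := fun _ _ => trivial
      have key : a + a = b + b → (a.val < m ↔ b.val < m) → a = b := by
        intro hab hiff
        have : (a - b) + (a - b) = 0 := by linear_combination hab
        rcases horder2 _ this with h0 | h0
        · exact sub_eq_zero.mp h0
        · exfalso
          have ha : a = b + m' := by linear_combination h0
          have := hvaddm b
          rw [← ha] at this
          by_cases hbm : b.val < m
          · rw [if_pos hbm] at this
            have := hiff.mpr hbm
            omega
          · rw [if_neg hbm] at this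
            have hbl := hvlt b
            have : a.val < m := by omega
            exact hbm (hiff.mp this)
      split_ifs at h with ha hb hb
      · rw [add_zero, add_zero] at h
        exact key h (by tauto)
      · exfalso
        have hv := congrArg ZMod.val h
        rw [add_zero] at hv
        have := hpar a
        have := hpar1 b
        omega
      · exfalso
        have hv := congrArg ZMod.val h
        rw [add_zero] at hv
        have := hpar1 a
        have := hpar b
        omega
      · have h' : a + a = b + b := by
          have : (a + a + 1) - 1 = (b + b + 1) - 1 := by rw [h]
          simpa using this
        exact key h' (by tauto)
  · -- odd case
    have hcop : Nat.Coprime 2 s := (Nat.prime_two.coprime_iff_not_dvd).2 hodd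
    set u := ZMod.unitOfCoprime 2 hcop with hu
    refine ⟨fun a b => a + b, id, Function.bijective_id, fun a => (Equiv.addLeft a).bijective,
      fun b => (Equiv.addRight b).bijective, ?_⟩
    have heq : (fun a : ZMod s => a + id a) = fun a => (u : ZMod s) * a := by
      funext a
      rw [hu, ZMod.coe_unitOfCoprime]
      show a + a = ((2:ℕ) : ZMod s) * a
      push_cast
      ring
    rw [heq, ← Finite.injective_iff_bijective]
    intro a b h
    have h' : (u : ZMod s) * a = (u : ZMod s) * b := h
    have := congrArg (fun z : ZMod s => ((u⁻¹ : (ZMod s)ˣ) : ZMod s) * z) h'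
    simpa [← mul_assoc] using this

/-- The prolongation of `L` by the disjoint transversals `T` with block square `Q`,
on the sum type. -/
noncomputable def extM {N s : ℕ} (L : Fin N → Fin N → Fin N)
    (T : Fin s → Equiv.Perm (Fin N)) (Q : Fin s → Fin s → Fin s) :
    (Fin N ⊕ Fin s) → (Fin N ⊕ Fin s) → (Fin N ⊕ Fin s)
  | .inl i, .inl j => if h : ∃ a, j = T a i then .inr h.choose else .inl (L i j)
  | .inl i, .inr b => .inl (L i (T b i))
  | .inr a, .inl j => .inl (L ((T a).symm j) j)
  | .inr a, .inr b => .inr (Q a b)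

section Ext
variable {N s : ℕ} (L : Fin N → Fin N → Fin N) (T : Fin s → Equiv.Perm (Fin N))
  (Q : Fin s → Fin s → Fin s)
  (hL : IsLatinSquare L) (hT : ∀ a, IsTransversal L (T a))
  (hdisj : ∀ a b : Fin s, a ≠ b → ∀ i, T a i ≠ T b i)
  (hQr : ∀ a, Function.Bijective (Q a)) (hQc : ∀ b, Function.Bijective fun a => Q a b)

include hdisj in
lemma extM_choose {i : Fin N} {j : Fin N} (h : ∃ a, j = T a i) (a : Fin s)
    (ha : j = T a i) : h.choose = a := by
  by_contra hne
  exact hdisj _ _ hne i (h.choose_spec ▸ ha ▸ rfl)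

include hL hT hdisj hQr in
lemma extM_row_bij : ∀ x, Function.Bijective (extM L T Q x) := by
  intro x
  rw [← Finite.injective_iff_bijective]
  rintro (j1 | b1) (j2 | b2) h <;> rcases x with i | a <;> simp only [extM] at h
  · -- inl inl, row inl i
    split_ifs at h with h1 h2 <;>
      simp only [Sum.inl.injEq, Sum.inr.injEq, reduceCtorEq] at h
    · have e1 := h1.choose_spec
      have e2 := h2.choose_spec
      rw [e1, e2, h]
    · rw [(hL.1 i).1 h]
  · -- inl inl, row inr a
    simp only [Sum.inl.injEq] at h
    have h' : L ((T a).symm j1) (T a ((T a).symm j1))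
        = L ((T a).symm j2) (T a ((T a).symm j2)) := by
      simpa using h
    have := (hT a).1 h'
    simpa using congrArg (T a) this
  · -- inl j1, inr b2, row inl i
    split_ifs at h with h1 <;>
      simp only [Sum.inl.injEq, Sum.inr.injEq, reduceCtorEq] at h
    exact absurd ⟨b2, (hL.1 i).1 h⟩ h1
  · -- inl j1, inr b2, row inr a : inl = inr impossible
    exact absurd h (by simp)
  · -- inr b1, inl j2, row inl i
    split_ifs at h with h1 <;>
      simp only [Sum.inl.injEq, Sum.inr.injEq, reduceCtorEq] at h
    exact absurd ⟨b1, ((hL.1 i).1 h).symm⟩ h1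
  · exact absurd h (by simp)
  · -- inr inr, row inl i
    simp only [Sum.inl.injEq] at h
    have := (hL.1 i).1 h
    by_contra hne
    exact hdisj b1 b2 (by simpa using hne) i this
  · -- inr inr, row inr a
    simp only [Sum.inr.injEq] at h
    rw [(hQr a).1 h]

include hL hT hdisj hQc in
lemma extM_col_bij : ∀ y, Function.Bijective (fun x => extM L T Q x y) := by
  intro y
  rw [← Finite.injective_iff_bijective]
  rintro (i1 | a1) (i2 | a2) h <;> rcases y with j | b <;> simp only [extM] at h
  · -- inl i1, inl i2, col inl j
    split_ifs at h with h1 h2 <;>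
      simp only [Sum.inl.injEq, Sum.inr.injEq, reduceCtorEq] at h
    · have e1 := h1.choose_spec
      have e2 := h2.choose_spec
      rw [Sum.inl.injEq]
      apply (T h1.choose).injective
      rw [← e1, h, ← e2]
    · rw [Sum.inl.injEq]
      exact (hL.2 j).1 h
  · -- col inr b
    simp only [Sum.inl.injEq] at h
    rw [Sum.inl.injEq]
    exact (hT b).1 h
  · -- inl i1, inr a2, col inl j
    split_ifs at h with h1 <;>
      simp only [Sum.inl.injEq, Sum.inr.injEq, reduceCtorEq] at h
    have : i1 = (T a2).symm j := (hL.2 j).1 h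
    exact absurd ⟨a2, by simp [this]⟩ h1
  · exact absurd h (by simp)
  · -- inr a1, inl i2, col inl j
    split_ifs at h with h1 <;>
      simp only [Sum.inl.injEq, Sum.inr.injEq, reduceCtorEq] at h
    have : (T a1).symm j = i2 := (hL.2 j).1 h
    exact absurd ⟨a1, by simp [← this]⟩ h1
  · exact absurd h (by simp)
  · -- inr a1, inr a2, col inl j
    simp only [Sum.inl.injEq] at h
    have heq : (T a1).symm j = (T a2).symm j := (hL.2 j).1 h
    rw [Sum.inr.injEq]
    by_contra hne
    apply hdisj a1 a2 hne ((T a1).symm j)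
    rw [Equiv.apply_symm_apply]
    conv_rhs => rw [heq, Equiv.apply_symm_apply]
  · -- col inr b
    simp only [Sum.inr.injEq] at h
    rw [Sum.inr.injEq]
    exact (hQc b).1 h

include hdisj in
lemma extM_transversal (σ : Equiv.Perm (Fin N)) (τ : Equiv.Perm (Fin s))
    (hσ : Function.Bijective fun i => L i (σ i))
    (havoid : ∀ (i : Fin N) (a : Fin s), σ i ≠ T a i)
    (hd : Function.Bijective fun a => Q a (τ a)) :
    Function.Bijective fun x => extM L T Q x (Equiv.sumCongr σ τ x) := by
  have heq : (fun x => extM L T Q x (Equiv.sumCongr σ τ x))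
      = Sum.map (fun i => L i (σ i)) (fun a => Q a (τ a)) := by
    funext x
    rcases x with i | a
    · show extM L T Q (.inl i) (.inl (σ i)) = _
      simp only [extM, Sum.map_inl]
      rw [dif_neg]
      rintro ⟨a, ha⟩
      exact havoid i a ha
    · rfl
  rw [heq]
  exact ⟨hσ.1.sumMap hd.1, hσ.2.sumMap hd.2⟩

end Ext


/-- If an order-`N` Latin square has `s ≥ 3` pairwise disjoint transversals and at
least `t` transversals avoiding all of their cells, then some order-`(N+s)` Latin
square has at least `t` transversals. -/
theorem extend_latin_square (N s t : ℕ) (hs : 3 ≤ s)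
    (L : Fin N → Fin N → Fin N) (hL : IsLatinSquare L)
    (T : Fin s → Equiv.Perm (Fin N)) (hT : ∀ a, IsTransversal L (T a))
    (hdisj : ∀ a b : Fin s, a ≠ b → ∀ i, T a i ≠ T b i)
    (ht : t ≤ Nat.card {σ : Equiv.Perm (Fin N) //
        IsTransversal L σ ∧ ∀ (i : Fin N) (a : Fin s), σ i ≠ T a i}) :
    ∃ L' : Fin (N + s) → Fin (N + s) → Fin (N + s),
      IsLatinSquare L' ∧ t ≤ transversalCount L' := by
  obtain ⟨Q, τ, hQr, hQc, hQd⟩ := zmod_block s hs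
  set E : (Fin N ⊕ Fin s) ≃ Fin (N + s) := finSumFinEquiv with hE
  set L' : Fin (N + s) → Fin (N + s) → Fin (N + s) :=
    fun x y => E (extM L T Q (E.symm x) (E.symm y)) with hL'
  refine ⟨L', ⟨fun x => ?_, fun y => ?_⟩, ?_⟩
  · exact E.bijective.comp (((extM_row_bij L T Q hL hT hdisj hQr _).comp E.symm.bijective))
  · exact E.bijective.comp (((extM_col_bij L T Q hL hT hdisj hQc _).comp E.symm.bijective))
  · have hF : ∀ σ : Equiv.Perm (Fin N),
        (IsTransversal L σ ∧ ∀ (i : Fin N) (a : Fin s), σ i ≠ T a i) →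
        IsTransversal L' (E.permCongr (Equiv.sumCongr σ τ)) := by
      intro σ ⟨hσ, havoid⟩
      show Function.Bijective fun x => L' x (E.permCongr (Equiv.sumCongr σ τ) x)
      have heq : (fun x => L' x (E.permCongr (Equiv.sumCongr σ τ) x))
          = fun x => E (extM L T Q (E.symm x) (Equiv.sumCongr σ τ (E.symm x))) := by
        funext x
        rw [hL']
        simp [Equiv.permCongr_apply]
      rw [heq]
      have : (fun x => E (extM L T Q (E.symm x) (Equiv.sumCongr σ τ (E.symm x))))
          = E ∘ (fun y => extM L T Q y (Equiv.sumCongr σ τ y)) ∘ E.symm := rfl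
      rw [this]
      exact E.bijective.comp ((extM_transversal L T Q hdisj σ τ hσ havoid hQd).comp
        E.symm.bijective)
    let F : {σ : Equiv.Perm (Fin N) //
        IsTransversal L σ ∧ ∀ (i : Fin N) (a : Fin s), σ i ≠ T a i} →
        {σ' : Equiv.Perm (Fin (N + s)) // IsTransversal L' σ'} :=
      fun p => ⟨E.permCongr (Equiv.sumCongr p.1 τ), hF p.1 p.2⟩
    have hFinj : Function.Injective F := by
      intro p1 p2 h
      have h1 : E.permCongr (Equiv.sumCongr p1.1 τ) = E.permCongr (Equiv.sumCongr p2.1 τ) :=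
        congrArg Subtype.val h
      have h2 : Equiv.sumCongr p1.1 τ = Equiv.sumCongr p2.1 τ := E.permCongr.injective h1
      apply Subtype.ext
      apply Equiv.ext
      intro i
      have := DFunLike.congr_fun h2 (Sum.inl i)
      simpa using this
    exact ht.trans (Nat.card_le_card_of_injective F hFinj)
end

section
/- Let n, k, b, ℓ be integers with n ≥ 1, k ≥ 1, b ≥ 1, 0 ≤ ℓ < n, and b·(n−ℓ) = k·n. Let P ⊆ {1,…,n}×{1,…,n} be a set containing exactly ℓ elements in each row and exactly ℓ elements in each column. Index the rows and columns of a (k·n²)×(k·n²) matrix by pairs (i,r) with i ∈ {1,…,n} and r ∈ {1,…,kn}, and for (i,j) ∈ {1,…,n}² let block (i,j) be the set of positions ((i,r),(j,c)) with r,c ∈ {1,…,kn}. Then the number of permutation matrices of order k·n² that have no 1 in any block (i,j) with (i,j) ∈ P and exactly b ones in every block (i,j) with (i,j) ∉ P equals ((kn)!)^{2n} / (b!)^{n(n−ℓ)}. -/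
/-!
A bijection `σ : α ≃ Σ j, γ j` is the same as the map `g = Sigma.fst ∘ σ` together with a
bijection from each fibre of `g` onto `γ j`. With `γ j = Fin (c j)` this gives the multinomial
count `|α|! / ∏ (c j)!` of maps with fibre sizes `c`. With `α = Fin n × Fin (k n)` and
`γ j = Fin (k n)`, the block conditions on a permutation only constrain `g`, row by row: row `i`
of `g` is a map `Fin (k n) → Fin n` with fibre sizes `0` on `P` and `b` off `P`, and the column
balance `b (n - ℓ) = k n` forces every fibre of `g` to have size `k n`. So the count is
`((k n)! / b! ^ (n - ℓ)) ^ n` choices of `g` times `(k n)! ^ n` choices of fibre bijections.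
-/

open Nat Finset

def equivSigmaEquivFiberEquivs {α β : Type*} (γ : β → Type*) :
    (α ≃ Σ j, γ j) ≃ Σ g : α → β, ∀ j, {a // g a = j} ≃ γ j where
  toFun e := ⟨fun a => (e a).1, fun j =>
    (e.subtypeEquiv fun _ => Iff.rfl).trans (Equiv.sigmaSubtype j)⟩
  invFun x := (Equiv.sigmaFiberEquiv x.1).symm.trans (Equiv.sigmaCongrRight x.2)
  left_inv _ := Equiv.ext fun _ => rfl
  right_inv := by
    rintro ⟨g, E⟩
    refine Sigma.ext rfl (heq_of_eq (funext fun j => Equiv.ext ?_))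
    rintro ⟨x, rfl⟩
    rfl

theorem natCard_equiv {α β : Type*} [Finite α] [Finite β] :
    Nat.card (α ≃ β) = if Nat.card α = Nat.card β then (Nat.card β)! else 0 := by
  split_ifs with h
  · obtain ⟨e⟩ := Finite.card_eq.1 h
    rw [← Nat.card_perm, Nat.card_congr (e.equivCongr (Equiv.refl β))]
  · have : IsEmpty (α ≃ β) := ⟨fun e => h (Nat.card_congr e)⟩
    exact Nat.card_of_isEmpty

theorem natCard_equiv_sigma_subtype_fst {α β : Type*} [Fintype α] [DecidableEq α] [Fintype β]
    (γ : β → Type*) [∀ j, Finite (γ j)] (p : (α → β) → Prop) [DecidablePred p] :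
    Nat.card {e : α ≃ Σ j, γ j // p fun a => (e a).1} =
      ∑ g with p g, ∏ j, Nat.card ({a // g a = j} ≃ γ j) := by
  let e : {e : α ≃ Σ j, γ j // p fun a => (e a).1} ≃
      Σ g : {g // p g}, ∀ j, {a // g.1 a = j} ≃ γ j :=
    ((equivSigmaEquivFiberEquivs γ).subtypeEquiv fun _ => Iff.rfl).trans
      (Equiv.subtypeSigmaEquiv _ p)
  rw [Nat.card_congr e, Nat.card_sigma]
  simp only [Nat.card_pi]
  rw [Finset.sum_subtype (univ.filter p) (p := p) (fun g => by simp)]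

theorem natCard_fiber_functions_mul_prod_factorial {α β : Type*} [Fintype α] [Fintype β]
    (c : β → ℕ) (hc : ∑ j, c j = Nat.card α) :
    Nat.card {g : α → β // ∀ j, Nat.card {a // g a = j} = c j} * ∏ j, (c j)! =
      (Nat.card α)! := by
  classical
  have hall : Nat.card {e : α ≃ Σ j, Fin (c j) // True} = (Nat.card α)! := by
    rw [Nat.card_congr (Equiv.subtypeUnivEquiv fun _ => trivial), natCard_equiv,
      if_pos (by simp [hc])]
    simp [hc]
  rw [← hall, natCard_equiv_sigma_subtype_fst _ (fun _ => True)]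
  simp only [natCard_equiv, Nat.card_fin, Finset.prod_ite_zero, mem_univ, true_implies,
    sum_ite, sum_const_zero, add_zero, sum_const, smul_eq_mul]
  simp [Nat.card_eq_fintype_card, Fintype.card_subtype]

theorem natCard_equiv_prod_subtype_fst {α β κ : Type*} [Fintype α] [Fintype β] [Finite κ]
    (p : (α → β) → Prop) (hp : ∀ g, p g → ∀ j, Nat.card {a // g a = j} = Nat.card κ) :
    Nat.card {e : α ≃ β × κ // p fun a => (e a).1} =
      Nat.card {g // p g} * (Nat.card κ)! ^ Nat.card β := by
  classical
  let e : {e : α ≃ β × κ // p fun a => (e a).1} ≃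
      {e : α ≃ Σ _ : β, κ // p fun a => (e a).1} :=
    (Equiv.refl α).equivCongr (Equiv.sigmaEquivProd β κ).symm |>.subtypeEquiv fun _ => Iff.rfl
  rw [Nat.card_congr e, natCard_equiv_sigma_subtype_fst, Finset.sum_congr rfl fun g hg => ?_,
    sum_const, smul_eq_mul, Nat.card_eq_fintype_card, Fintype.card_subtype]
  rw [mem_filter] at hg
  simp only [natCard_equiv, hp g hg.2, if_true, prod_const, Finset.card_univ,
    Nat.card_eq_fintype_card]

theorem natCard_curry_subtype {ι κ β : Type*} [Fintype ι] (q : ι → (κ → β) → Prop) :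
    Nat.card {g : ι × κ → β // ∀ i, q i fun r => g (i, r)} =
      ∏ i, Nat.card {h // q i h} := by
  let e : {g : ι × κ → β // ∀ i, q i fun r => g (i, r)} ≃ ∀ i, {h // q i h} :=
    ((Equiv.curry ι κ β).subtypeEquiv fun _ => Iff.rfl).trans Equiv.subtypePiEquivPi
  rw [Nat.card_congr e, Nat.card_pi]

theorem natCard_fiber_prod {ι κ β : Type*} [Fintype ι] [Finite κ] (g : ι × κ → β)
    (j : β) :
    Nat.card {a // g a = j} = ∑ i, Nat.card {r // g (i, r) = j} := by
  rw [Nat.card_congr (Equiv.subtypeProdEquivSigmaSubtype fun i r => g (i, r) = j),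
    Nat.card_sigma]

theorem natCard_equiv_prod_block_cards_mul_prod_factorial {ι κ β κ' : Type*} [Fintype ι]
    [Fintype κ] [Fintype β] [Finite κ'] (m : ι → β → ℕ)
    (hrow : ∀ i, ∑ j, m i j = Nat.card κ) (hcol : ∀ j, ∑ i, m i j = Nat.card κ') :
    Nat.card {e : ι × κ ≃ β × κ' // ∀ i j, Nat.card {r // (e (i, r)).1 = j} = m i j} *
        ∏ i, ∏ j, (m i j)! =
      (Nat.card κ)! ^ Nat.card ι * (Nat.card κ')! ^ Nat.card β := by
  classical
  have hfiber : ∀ g : ι × κ → β, (∀ i j, Nat.card {r // g (i, r) = j} = m i j) →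
      ∀ j, Nat.card {a // g a = j} = Nat.card κ' := fun g hg j => by
    simp only [natCard_fiber_prod, hg, hcol]
  rw [natCard_equiv_prod_subtype_fst _ hfiber,
    natCard_curry_subtype fun i h => ∀ j, Nat.card {r // h r = j} = m i j,
    mul_right_comm, ← prod_mul_distrib, Finset.prod_congr rfl fun i _ =>
      natCard_fiber_functions_mul_prod_factorial (m i) (hrow i),
    prod_const, Finset.card_univ, Nat.card_eq_fintype_card (α := ι)]

def blockCounts {ι β : Type*} [DecidableEq ι] [DecidableEq β] (P : Finset (ι × β)) (b : ℕ)
    (i : ι) (j : β) : ℕ :=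
  if (i, j) ∈ P then 0 else b

section blockCounts

variable {ι β : Type*} [DecidableEq ι] [DecidableEq β] (P : Finset (ι × β)) (b : ℕ)

theorem avoid_and_card_eq_iff_blockCounts {κ : Type*} [Finite κ] (g : ι × κ → β) :
    ((∀ i j, (i, j) ∈ P → ∀ r, g (i, r) ≠ j) ∧
        (∀ i j, (i, j) ∉ P → Nat.card {r // g (i, r) = j} = b)) ↔
      ∀ i j, Nat.card {r // g (i, r) = j} = blockCounts P b i j := by
  have hzero : ∀ i j, Nat.card {r // g (i, r) = j} = 0 ↔ ∀ r, g (i, r) ≠ j := fun i j => by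
    rw [Finite.card_eq_zero_iff, isEmpty_subtype]
  constructor
  · rintro ⟨havoid, hcard⟩ i j
    unfold blockCounts
    split_ifs with hij
    exacts [(hzero i j).2 (havoid i j hij), hcard i j hij]
  · intro h
    refine ⟨fun i j hij => (hzero i j).1 ?_, fun i j hij => ?_⟩ <;>
      simpa [blockCounts, hij] using h i j

theorem sum_blockCounts_row [Fintype β] (i : ι) :
    ∑ j, blockCounts P b i j = b * #{j | (i, j) ∉ P} := by
  simp [blockCounts, sum_ite, mul_comm]

theorem sum_blockCounts_col [Fintype ι] (j : β) :
    ∑ i, blockCounts P b i j = b * #{i | (i, j) ∉ P} := by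
  simp [blockCounts, sum_ite, mul_comm]

theorem prod_factorial_blockCounts_row [Fintype β] (i : ι) :
    ∏ j, (blockCounts P b i j)! = b ! ^ #{j | (i, j) ∉ P} := by
  simp [blockCounts, apply_ite, prod_ite]

theorem card_filter_notMem_row [Fintype β] (i : ι) :
    #{j | (i, j) ∉ P} = Fintype.card β - #{p ∈ P | p.1 = i} := by
  have hmem : #{j | (i, j) ∈ P} = #{p ∈ P | p.1 = i} :=
    card_nbij' (Prod.mk i) Prod.snd (fun j hj => by simpa using hj)
      (by rintro ⟨a, c⟩ h; obtain ⟨hP, rfl⟩ := mem_filter.1 h; simpa using hP)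
      (fun _ _ => rfl) (by rintro ⟨a, c⟩ h; simp_all)
  rw [← hmem, ← Finset.card_univ,
    ← card_filter_add_card_filter_not (s := univ) (fun j => (i, j) ∈ P)]
  omega

theorem card_filter_notMem_col [Fintype ι] (j : β) :
    #{i | (i, j) ∉ P} = Fintype.card ι - #{p ∈ P | p.2 = j} := by
  have hmem : #{i | (i, j) ∈ P} = #{p ∈ P | p.2 = j} :=
    card_nbij' (·, j) Prod.fst (fun i hi => by simpa using hi)
      (by rintro ⟨a, c⟩ h; obtain ⟨hP, rfl⟩ := mem_filter.1 h; simpa using hP)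
      (fun _ _ => rfl) (by rintro ⟨a, c⟩ h; simp_all)
  rw [← hmem, ← Finset.card_univ,
    ← card_filter_add_card_filter_not (s := univ) (fun i => (i, j) ∈ P)]
  omega

end blockCounts

/-- The matrix of `σ` has its ones at the positions `((i, r), σ (i, r))`. -/
theorem count_block_permutation_matrices_general (n k b ℓ : ℕ)
    (hbal : b * (n - ℓ) = k * n)
    (P : Finset (Fin n × Fin n))
    (hrow : ∀ i : Fin n, (P.filter fun p => p.1 = i).card = ℓ)
    (hcol : ∀ j : Fin n, (P.filter fun p => p.2 = j).card = ℓ) :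
    (Nat.card {σ : Equiv.Perm (Fin n × Fin (k * n)) //
        (∀ (i j : Fin n), (i, j) ∈ P → ∀ r : Fin (k * n), (σ (i, r)).1 ≠ j) ∧
        (∀ (i j : Fin n), (i, j) ∉ P →
          Nat.card {r : Fin (k * n) // (σ (i, r)).1 = j} = b)} : ℝ)
      = ((k * n)! : ℝ) ^ (2 * n) / (b ! : ℝ) ^ (n * (n - ℓ)) := by
  have hfree_row (i : Fin n) : #{j | (i, j) ∉ P} = n - ℓ := by
    rw [card_filter_notMem_row, hrow, Fintype.card_fin]
  have hfree_col (j : Fin n) : #{i | (i, j) ∉ P} = n - ℓ := by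
    rw [card_filter_notMem_col, hcol, Fintype.card_fin]
  have hcount := natCard_equiv_prod_block_cards_mul_prod_factorial
    (κ := Fin (k * n)) (κ' := Fin (k * n))
    (blockCounts P b) (fun i => by rw [sum_blockCounts_row, hfree_row, hbal, Nat.card_fin])
    (fun j => by rw [sum_blockCounts_col, hfree_col, hbal, Nat.card_fin])
  simp only [prod_factorial_blockCounts_row, hfree_row, prod_const, Finset.card_univ,
    Fintype.card_fin, Nat.card_fin, ← pow_mul, ← pow_add, ← two_mul] at hcount
  rw [Nat.card_congr (Equiv.subtypeEquivRight fun σ : Equiv.Perm (Fin n × Fin (k * n)) =>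
      avoid_and_card_eq_iff_blockCounts P b fun a => (σ a).1),
    eq_div_iff (by positivity), mul_comm n]
  exact_mod_cast hcount

/-- Counting permutation matrices of order `k·n²` (rows and columns indexed by
pairs `(i, r)` with `i : Fin n`, `r : Fin (k·n)`; the matrix of `σ` has a `1` at
position `((i,r), (j,c))` iff `σ (i,r) = (j,c)`) that avoid all blocks `(i,j) ∈ P`
and have exactly `b` ones in every other block, where `P` has exactly `ℓ` cells
in every row and column. -/
theorem count_block_permutation_matrices (n k b ℓ : ℕ)
    (hn : 1 ≤ n) (hk : 1 ≤ k) (hb : 1 ≤ b) (hℓ : ℓ < n)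
    (hbal : b * (n - ℓ) = k * n)
    (P : Finset (Fin n × Fin n))
    (hrow : ∀ i : Fin n, (P.filter fun p => p.1 = i).card = ℓ)
    (hcol : ∀ j : Fin n, (P.filter fun p => p.2 = j).card = ℓ) :
    (Nat.card {σ : Equiv.Perm (Fin n × Fin (k * n)) //
        (∀ (i j : Fin n), (i, j) ∈ P → ∀ r : Fin (k * n), (σ (i, r)).1 ≠ j) ∧
        (∀ (i j : Fin n), (i, j) ∉ P →
          Nat.card {r : Fin (k * n) // (σ (i, r)).1 = j} = b)} : ℝ)
      = ((k * n)! : ℝ) ^ (2 * n) / (b ! : ℝ) ^ (n * (n - ℓ)) :=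
  count_block_permutation_matrices_general n k b ℓ hbal P hrow hcol
end

section
/- Let m ≥ 1, b ≥ 1, f ≥ 0 with b + f ≤ m. Fix cells (r₁,c₁), …, (r_b,c_b) of an m×m grid lying in pairwise distinct rows and pairwise distinct columns, and fix a set F ⊆ {1,…,m} of symbols with |F| = f. Let 𝒜 be the set of order-m Latin squares whose entries at the b fixed cells are pairwise distinct, and let ℬ ⊆ 𝒜 be the set of those Latin squares whose entries at the b fixed cells are moreover all outside F. Then |ℬ| · C(m,b) = |𝒜| · C(m−f, b), where C(·,·) denotes the binomial coefficient. -/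
attribute [local instance] Classical.propDecidable

namespace LatinAux

variable {m b : ℕ} (r c : Fin b → Fin m)

def P (L : Fin m → Fin m → Fin m) : Prop :=
  IsLatinSquare L ∧ Function.Injective (fun t : Fin b => L (r t) (c t))

noncomputable def gval (L : Fin m → Fin m → Fin m) : Finset (Fin m) :=
  Finset.image (fun t : Fin b => L (r t) (c t)) Finset.univ

lemma fiber_mem_map (π : Equiv.Perm (Fin m)) {T T' : Finset (Fin m)}
    (hπ : T.image π = T') {L} (hL : P r c L) (hg : gval r c L = T) :
    P r c (fun i j => π (L i j)) ∧ gval r c (fun i j => π (L i j)) = T' := by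
  obtain ⟨⟨hrow, hcol⟩, hinj⟩ := hL
  refine ⟨⟨⟨fun i => π.bijective.comp (hrow i), fun j => π.bijective.comp (hcol j)⟩,
    Function.Injective.comp π.injective hinj⟩, ?_⟩
  have h1 : gval r c (fun i j => π (L i j)) = (gval r c L).image π := by
    rw [gval, gval, Finset.image_image]
    rfl
  rw [h1, hg, hπ]

lemma card_gval {L} (hL : P r c L) : (gval r c L).card = b := by
  rw [gval, Finset.card_image_of_injective _ hL.2, Finset.card_univ, Fintype.card_fin]

lemma fiber_card_eq (T T' : Finset (Fin m)) (hT : T.card = b) (hT' : T'.card = b) :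
    (Finset.univ.filter fun L => P r c L ∧ gval r c L = T).card
      = (Finset.univ.filter fun L => P r c L ∧ gval r c L = T').card := by
  have hcard : Fintype.card {x // x ∈ T} = Fintype.card {x // x ∈ T'} := by
    simp [Fintype.card_subtype, hT, hT']
  let e := Fintype.equivOfCardEq hcard
  let π : Equiv.Perm (Fin m) := e.extendSubtype
  have hπT : T.image π = T' := by
    apply Finset.eq_of_subset_of_card_le
    · intro x hx
      obtain ⟨y, hy, rfl⟩ := Finset.mem_image.mp hx
      exact e.extendSubtype_mem _ hy
    · rw [Finset.card_image_of_injective _ π.injective, hT, hT']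
  have hπT' : T'.image π.symm = T := by
    rw [← hπT, Finset.image_image]
    simp
  refine Finset.card_bij' (fun L _ => fun i j => π (L i j))
    (fun L _ => fun i j => π.symm (L i j)) ?_ ?_ ?_ ?_
  · intro L hL
    rw [Finset.mem_filter] at hL ⊢
    exact ⟨Finset.mem_univ _, fiber_mem_map r c π hπT hL.2.1 hL.2.2⟩
  · intro L hL
    rw [Finset.mem_filter] at hL ⊢
    exact ⟨Finset.mem_univ _, fiber_mem_map r c π.symm hπT' hL.2.1 hL.2.2⟩
  · intro L _; funext i j; simp
  · intro L _; funext i j; simp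

end LatinAux

open LatinAux

/-- Symmetry of the symbols of a random Latin square: among order-`m` Latin
squares whose entries at `b` fixed cells (in distinct rows `r t` and distinct
columns `c t`) are pairwise distinct, the proportion whose entries at those cells
moreover avoid a fixed symbol set `F` of size `f` is `C(m-f, b) / C(m, b)`. -/
theorem latin_squares_avoiding_symbols_count (m b f : ℕ)
    (hm : 1 ≤ m) (hb : 1 ≤ b) (hbf : b + f ≤ m)
    (r c : Fin b → Fin m) (hr : Function.Injective r) (hc : Function.Injective c)
    (F : Finset (Fin m)) (hF : F.card = f) :
    Nat.card {L : Fin m → Fin m → Fin m // IsLatinSquare L ∧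
        Function.Injective (fun t : Fin b => L (r t) (c t)) ∧
        ∀ t : Fin b, L (r t) (c t) ∉ F} * Nat.choose m b
      = Nat.card {L : Fin m → Fin m → Fin m // IsLatinSquare L ∧
          Function.Injective (fun t : Fin b => L (r t) (c t))} * Nat.choose (m - f) b := by
  have hFc : (Fᶜ : Finset (Fin m)).card = m - f := by
    simp [Finset.card_compl, hF]
  have hbmf : b ≤ (Fᶜ : Finset (Fin m)).card := by omega
  obtain ⟨T₀, hT₀sub, hT₀card⟩ := Finset.exists_subset_card_eq hbmf
  set N := (Finset.univ.filter fun L => P r c L ∧ gval r c L = T₀).card with hN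
  -- count of A
  have hA : Nat.card {L : Fin m → Fin m → Fin m // IsLatinSquare L ∧
      Function.Injective (fun t : Fin b => L (r t) (c t))}
      = (Finset.univ.filter fun L => P r c L).card := by
    rw [Nat.card_eq_fintype_card, Fintype.card_subtype]
    congr 1
    ext L
    simp only [Finset.mem_filter, Finset.mem_univ, true_and]; rfl
  have hAcount : (Finset.univ.filter fun L => P r c L).card = m.choose b * N := by
    rw [Finset.card_eq_sum_card_fiberwise (f := gval r c)
      (t := Finset.powersetCard b Finset.univ)
      (fun L hL => Finset.mem_powersetCard.mpr
        ⟨Finset.subset_univ _, card_gval r c (Finset.mem_filter.mp hL).2⟩)]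
    rw [Finset.sum_congr rfl (fun T hT => ?_), Finset.sum_const, Finset.card_powersetCard,
      Finset.card_univ, Fintype.card_fin, smul_eq_mul]
    rw [Finset.filter_filter]
    exact fiber_card_eq r c T T₀ (Finset.mem_powersetCard.mp hT).2 hT₀card
  -- count of B
  have hB : Nat.card {L : Fin m → Fin m → Fin m // IsLatinSquare L ∧
      Function.Injective (fun t : Fin b => L (r t) (c t)) ∧
      ∀ t : Fin b, L (r t) (c t) ∉ F}
      = (Finset.univ.filter fun L => P r c L ∧ ∀ t : Fin b, L (r t) (c t) ∉ F).card := by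
    rw [Nat.card_eq_fintype_card, Fintype.card_subtype]
    congr 1
    ext L
    simp [P, and_assoc]
  have hBcount : (Finset.univ.filter fun L => P r c L ∧
      ∀ t : Fin b, L (r t) (c t) ∉ F).card = (m - f).choose b * N := by
    rw [Finset.card_eq_sum_card_fiberwise (f := gval r c)
      (t := Finset.powersetCard b Fᶜ) (fun L hL => ?_)]
    · rw [Finset.sum_congr rfl (fun T hT => ?_), Finset.sum_const,
        Finset.card_powersetCard, hFc, smul_eq_mul]
      rw [Finset.filter_filter]
      have hTmem := Finset.mem_powersetCard.mp hT
      have hfilter : (Finset.univ.filter fun L => (P r c L ∧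
          ∀ t : Fin b, L (r t) (c t) ∉ F) ∧ gval r c L = T)
          = Finset.univ.filter fun L => P r c L ∧ gval r c L = T := by
        ext L
        simp only [Finset.mem_filter, Finset.mem_univ, true_and]
        constructor
        · rintro ⟨⟨hP, _⟩, hg⟩; exact ⟨hP, hg⟩
        · rintro ⟨hP, hg⟩
          refine ⟨⟨hP, fun t => ?_⟩, hg⟩
          have : L (r t) (c t) ∈ gval r c L := Finset.mem_image_of_mem _ (Finset.mem_univ t)
          rw [hg] at this
          have := hTmem.1 this
          simpa using this
      rw [hfilter]
      exact fiber_card_eq r c T T₀ hTmem.2 hT₀card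
    · have hL' := (Finset.mem_filter.mp hL).2
      refine Finset.mem_powersetCard.mpr ⟨fun x hx => ?_, card_gval r c hL'.1⟩
      obtain ⟨t, _, rfl⟩ := Finset.mem_image.mp hx
      simpa using hL'.2 t
  rw [hA, hAcount, hB, hBcount]
  ring
end

section
/- Let S be an order-n Latin square over {1,…,n}, let m ≥ 1, for each s ∈ {1,…,n} let A_s = {(s−1)m+1, …, sm}, and for each (i,j) ∈ {1,…,n}² let Q_{i,j} be an m×m matrix over alphabet A_{S(i,j)} in which every symbol of A_{S(i,j)} occurs exactly once in every row and column. Let L be the order-nm Latin square defined block-wise by L((i−1)m+r, (j−1)m+c) = Q_{i,j}(r,c). Suppose S has ℓ pairwise disjoint transversals T₁, …, T_ℓ, and suppose that for every cell (i,j) belonging to one of T₁, …, T_ℓ, the square Q_{i,j} admits a decomposition into m pairwise disjoint transversals. Then L contains ℓ·m pairwise disjoint transversals, each contained in the union of the blocks corresponding to cells of T₁ ∪ ⋯ ∪ T_ℓ. -/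
/-- The index `(i-1)·m + r` (0-indexed: `i·m + r`) of the `r`-th row/column/symbol
of the `i`-th block. Under this encoding, `Fin (n*m)`-valued Latin squares with
symbol `blockIdx s q` correspond to squares over the alphabets
`A_s = {(s-1)m+1, …, sm}` of the paper. -/
def blockIdx {n m : ℕ} (i : Fin n) (r : Fin m) : Fin (n * m) :=
  ⟨i.1 * m + r.1, by
    have h1 : i.1 + 1 ≤ n := i.2
    have h2 : r.1 < m := r.2
    calc i.1 * m + r.1 < i.1 * m + m := by omega
      _ = (i.1 + 1) * m := by ring
      _ ≤ n * m := Nat.mul_le_mul_right m h1⟩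

/-!
Each transversal `τ` of `S`, together with a choice of one transversal `D i` of every block
`Q i (τ i)` on it, lifts to a transversal of `L`: row `i·m + r` of `L` is matched with
column `τ i · m + D i r`. Indexed as `(i, r) ↦ (τ i, D i r)` this map is a shear of
`Fin n × Fin m`, and so is the symbol map `(i, r) ↦ (S i (τ i), Q i (τ i) r (D i r))`.
Lifts of distinct transversals of `S`, or of distinct transversals `D` over the same one, are
disjoint because they already differ in the block, resp. in the position inside the block.
-/

theorem Function.Bijective.prod_shear {α β γ δ : Type*} {f : α → β} (hf : f.Bijective)
    {g : α → γ → δ} (hg : ∀ a, (g a).Bijective) :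
    Function.Bijective fun p : α × γ => (f p.1, g p.1 p.2) :=
  (Equiv.prodShear (Equiv.ofBijective f hf) fun a => Equiv.ofBijective _ (hg a)).bijective

section Block

variable {n m : ℕ}

theorem finProdFinEquiv_eq_blockIdx (i : Fin n) (r : Fin m) :
    finProdFinEquiv (i, r) = blockIdx i r :=
  Fin.ext (by simp [finProdFinEquiv, blockIdx, add_comm, mul_comm])

theorem blockIdx_inj {i j : Fin n} {r c : Fin m} :
    blockIdx i r = blockIdx j c ↔ i = j ∧ r = c := by
  rw [← finProdFinEquiv_eq_blockIdx, ← finProdFinEquiv_eq_blockIdx,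
    finProdFinEquiv.injective.eq_iff, Prod.ext_iff]

theorem exists_blockIdx_eq (x : Fin (n * m)) : ∃ i r, blockIdx i r = x :=
  let ⟨p, hp⟩ := finProdFinEquiv.surjective x
  ⟨p.1, p.2, (finProdFinEquiv_eq_blockIdx p.1 p.2).symm.trans hp⟩

def blockPerm (π : Equiv.Perm (Fin n)) (D : Fin n → Equiv.Perm (Fin m)) :
    Equiv.Perm (Fin (n * m)) :=
  finProdFinEquiv.permCongr (Equiv.prodShear π D)

@[simp]
theorem blockPerm_blockIdx (π : Equiv.Perm (Fin n))
    (D : Fin n → Equiv.Perm (Fin m)) (i : Fin n) (r : Fin m) :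
    blockPerm π D (blockIdx i r) = blockIdx (π i) (D i r) := by
  simp [blockPerm, Equiv.permCongr_apply, ← finProdFinEquiv_eq_blockIdx]

theorem isTransversal_blockPerm {S : Fin n → Fin n → Fin n}
    {Q : Fin n → Fin n → Fin m → Fin m → Fin m} {L : Fin (n * m) → Fin (n * m) → Fin (n * m)}
    (hL : ∀ i j r c, L (blockIdx i r) (blockIdx j c) = blockIdx (S i j) (Q i j r c))
    {π : Equiv.Perm (Fin n)} (hπ : IsTransversal S π) {D : Fin n → Equiv.Perm (Fin m)}
    (hD : ∀ i, IsTransversal (Q i (π i)) (D i)) :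
    IsTransversal L (blockPerm π D) := by
  have hconj : (fun x => L x (blockPerm π D x)) ∘ finProdFinEquiv =
      finProdFinEquiv ∘ fun p => (S p.1 (π p.1), Q p.1 (π p.1) p.2 (D p.1 p.2)) := by
    funext ⟨i, r⟩
    simp [finProdFinEquiv_eq_blockIdx, hL]
  unfold IsTransversal
  rw [← Equiv.bijective_comp finProdFinEquiv, hconj, Equiv.comp_bijective]
  exact hπ.prod_shear hD

theorem blockPerm_apply_ne {π π' : Equiv.Perm (Fin n)}
    {D D' : Fin n → Equiv.Perm (Fin m)} (h : ∀ i r, π i ≠ π' i ∨ D i r ≠ D' i r)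
    (x : Fin (n * m)) : blockPerm π D x ≠ blockPerm π' D' x := by
  obtain ⟨i, r, rfl⟩ := exists_blockIdx_eq x
  rw [blockPerm_blockIdx, blockPerm_blockIdx, Ne, blockIdx_inj, not_and_or]
  exact h i r

end Block

theorem block_construction_disjoint_transversals_general (n m ℓ : ℕ)
    (S : Fin n → Fin n → Fin n)
    (Q : Fin n → Fin n → Fin m → Fin m → Fin m)
    (L : Fin (n * m) → Fin (n * m) → Fin (n * m))
    (hL : ∀ (i j : Fin n) (r c : Fin m),
      L (blockIdx i r) (blockIdx j c) = blockIdx (S i j) (Q i j r c))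
    (τ : Fin ℓ → Equiv.Perm (Fin n)) (hτ : ∀ a, IsTransversal S (τ a))
    (hτdisj : ∀ a b : Fin ℓ, a ≠ b → ∀ i, τ a i ≠ τ b i)
    (hdecomp : ∀ (a : Fin ℓ) (i : Fin n), ∃ D : Fin m → Equiv.Perm (Fin m),
      (∀ r, IsTransversal (Q i (τ a i)) (D r)) ∧
      (∀ r r' : Fin m, r ≠ r' → ∀ x, D r x ≠ D r' x)) :
    ∃ σ : Fin (ℓ * m) → Equiv.Perm (Fin (n * m)),
      (∀ a, IsTransversal L (σ a)) ∧
      (∀ a b : Fin (ℓ * m), a ≠ b → ∀ x, σ a x ≠ σ b x) ∧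
      (∀ (a : Fin (ℓ * m)) (x : Fin (n * m)), ∃ (t : Fin ℓ) (i : Fin n) (r c : Fin m),
        x = blockIdx i r ∧ σ a x = blockIdx (τ t i) c) := by
  choose D hD hDdisj using hdecomp
  let σ : Fin ℓ × Fin m → Equiv.Perm (Fin (n * m)) := fun p =>
    blockPerm (τ p.1) fun i => D p.1 i p.2
  have hσdisj : ∀ p q, p ≠ q → ∀ x, σ p x ≠ σ q x := by
    rintro ⟨t, k⟩ ⟨t', k'⟩ hpq
    refine blockPerm_apply_ne fun i r => ?_
    by_cases ht : t = t'
    · subst ht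
      exact .inr (hDdisj t i k k' (by simpa using hpq) r)
    · exact .inl (hτdisj t t' ht i)
  refine ⟨σ ∘ finProdFinEquiv.symm, fun a => ?_, fun a b hab => ?_, fun a x => ?_⟩
  · exact isTransversal_blockPerm hL (hτ _) fun i => hD _ i _
  · exact hσdisj _ _ (finProdFinEquiv.symm.injective.ne hab)
  · obtain ⟨i, r, rfl⟩ := exists_blockIdx_eq x
    exact ⟨_, i, r, _, rfl, blockPerm_blockIdx _ _ i r⟩

/-- If `S` has `ℓ` pairwise disjoint transversals `τ 0, …, τ (ℓ-1)` and each block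
square `Q i (τ a i)` sitting on a cell of one of these transversals decomposes
into `m` pairwise disjoint transversals, then the block-construction square `L`
contains `ℓ·m` pairwise disjoint transversals, each contained in the union of the
blocks corresponding to the cells of the `τ a`. -/
theorem block_construction_disjoint_transversals (n m ℓ : ℕ) (hm : 1 ≤ m)
    (S : Fin n → Fin n → Fin n) (hS : IsLatinSquare S)
    (Q : Fin n → Fin n → Fin m → Fin m → Fin m) (hQ : ∀ i j, IsLatinSquare (Q i j))
    (L : Fin (n * m) → Fin (n * m) → Fin (n * m))
    (hL : ∀ (i j : Fin n) (r c : Fin m),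
      L (blockIdx i r) (blockIdx j c) = blockIdx (S i j) (Q i j r c))
    (τ : Fin ℓ → Equiv.Perm (Fin n)) (hτ : ∀ a, IsTransversal S (τ a))
    (hτdisj : ∀ a b : Fin ℓ, a ≠ b → ∀ i, τ a i ≠ τ b i)
    (hdecomp : ∀ (a : Fin ℓ) (i : Fin n), ∃ D : Fin m → Equiv.Perm (Fin m),
      (∀ r, IsTransversal (Q i (τ a i)) (D r)) ∧
      (∀ r r' : Fin m, r ≠ r' → ∀ x, D r x ≠ D r' x)) :
    ∃ σ : Fin (ℓ * m) → Equiv.Perm (Fin (n * m)),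
      (∀ a, IsTransversal L (σ a)) ∧
      (∀ a b : Fin (ℓ * m), a ≠ b → ∀ x, σ a x ≠ σ b x) ∧
      (∀ (a : Fin (ℓ * m)) (x : Fin (n * m)), ∃ (t : Fin ℓ) (i : Fin n) (r c : Fin m),
        x = blockIdx i r ∧ σ a x = blockIdx (τ t i) c) :=
  block_construction_disjoint_transversals_general n m ℓ S Q L hL τ hτ hτdisj hdecomp
end
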